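/- arXiv:2008.11768 — 11 statements merged into one kernel-verified Lean document; each statement's English description precedes it below -/
import Mathlib

section
/- Let H be a complex inner product space and let u, v ∈ H satisfy ‖u‖ = ‖v‖ and u ≠ 0. Then for every nonzero h ∈ H one has (‖u‖⁴ − |⟨u, v⟩|²)/‖u‖² ≥ (|⟨u, h⟩| − |⟨v, h⟩|)²/‖h‖². -/
/-!
Split `v = P v + Q v`, where `P` is the orthogonal projection onto `𝕜 ∙ u` and `Q` the one onto
its complement. Since `P v = (⟪u, v⟫ / ‖u‖²) • u` with coefficient of norm at most `1` when
`‖v‖ ≤ ‖u‖`, one gets `|⟪v, h⟫| ≤ |⟪u, h⟫| + ‖Q v‖ ‖h‖`, and by Pythagoras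
`‖Q v‖² = ‖v‖² - |⟪u, v⟫|² / ‖u‖²`. When `‖u‖ = ‖v‖` this quantity is symmetric in `u` and `v`,
so the same bound holds with `u` and `v` exchanged, and squaring gives the claim.
-/

open scoped InnerProductSpace

section ProjectionBound

variable {𝕜 E : Type*} [RCLike 𝕜] [NormedAddCommGroup E] [InnerProductSpace 𝕜 E]

lemma norm_starProjection_singleton (u v : E) :
    ‖(𝕜 ∙ u).starProjection v‖ = ‖⟪u, v⟫_𝕜‖ / ‖u‖ := by
  rcases eq_or_ne u 0 with rfl | hu
  · simp
  have hu' : ‖u‖ ≠ 0 := norm_ne_zero_iff.mpr hu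
  rw [Submodule.starProjection_singleton, norm_smul, norm_div, RCLike.norm_ofReal,
    abs_of_nonneg (by positivity)]
  field_simp

lemma norm_sq_starProjection_orthogonal_singleton (u v : E) :
    ‖(𝕜 ∙ u)ᗮ.starProjection v‖ ^ 2 = ‖v‖ ^ 2 - ‖⟪u, v⟫_𝕜‖ ^ 2 / ‖u‖ ^ 2 := by
  rw [Submodule.norm_sq_eq_add_norm_sq_starProjection v (𝕜 ∙ u), norm_starProjection_singleton,
    div_pow]
  ring

lemma norm_inner_starProjection_singleton_left (u v h : E) :
    ‖⟪(𝕜 ∙ u).starProjection v, h⟫_𝕜‖ = ‖⟪u, v⟫_𝕜‖ / ‖u‖ ^ 2 * ‖⟪u, h⟫_𝕜‖ := by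
  rw [Submodule.starProjection_singleton, inner_smul_left, norm_mul, RCLike.norm_conj, norm_div,
    RCLike.norm_ofReal, abs_of_nonneg (by positivity)]

lemma norm_inner_le_norm_inner_add_of_norm_le {u v : E} (hvu : ‖v‖ ≤ ‖u‖) (h : E) :
    ‖⟪v, h⟫_𝕜‖ ≤ ‖⟪u, h⟫_𝕜‖ + ‖(𝕜 ∙ u)ᗮ.starProjection v‖ * ‖h‖ := by
  have hcoeff : ‖⟪u, v⟫_𝕜‖ / ‖u‖ ^ 2 ≤ 1 := by
    refine div_le_one_of_le₀ ?_ (by positivity)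
    calc ‖⟪u, v⟫_𝕜‖ ≤ ‖u‖ * ‖v‖ := norm_inner_le_norm u v
      _ ≤ ‖u‖ ^ 2 := by rw [sq]; gcongr
  have hsplit : ⟪v, h⟫_𝕜 =
      ⟪(𝕜 ∙ u).starProjection v, h⟫_𝕜 + ⟪(𝕜 ∙ u)ᗮ.starProjection v, h⟫_𝕜 := by
    rw [← inner_add_left, Submodule.starProjection_add_starProjection_orthogonal]
  calc ‖⟪v, h⟫_𝕜‖
      ≤ ‖⟪(𝕜 ∙ u).starProjection v, h⟫_𝕜‖ + ‖⟪(𝕜 ∙ u)ᗮ.starProjection v, h⟫_𝕜‖ :=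
        hsplit ▸ norm_add_le _ _
    _ ≤ 1 * ‖⟪u, h⟫_𝕜‖ + ‖(𝕜 ∙ u)ᗮ.starProjection v‖ * ‖h‖ := by
        rw [norm_inner_starProjection_singleton_left]
        gcongr
        exact norm_inner_le_norm _ _
    _ = ‖⟪u, h⟫_𝕜‖ + ‖(𝕜 ∙ u)ᗮ.starProjection v‖ * ‖h‖ := by rw [one_mul]

lemma sq_norm_inner_sub_norm_inner_le {u v : E} (huv : ‖u‖ = ‖v‖) (h : E) :
    (‖⟪u, h⟫_𝕜‖ - ‖⟪v, h⟫_𝕜‖) ^ 2 ≤ ‖(𝕜 ∙ u)ᗮ.starProjection v‖ ^ 2 * ‖h‖ ^ 2 := by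
  have hsymm : ‖(𝕜 ∙ v)ᗮ.starProjection u‖ = ‖(𝕜 ∙ u)ᗮ.starProjection v‖ := by
    rw [← sq_eq_sq₀ (norm_nonneg _) (norm_nonneg _), norm_sq_starProjection_orthogonal_singleton,
      norm_sq_starProjection_orthogonal_singleton, norm_inner_symm, huv]
  have hvu := norm_inner_le_norm_inner_add_of_norm_le (𝕜 := 𝕜) huv.ge h
  have huv' := norm_inner_le_norm_inner_add_of_norm_le (𝕜 := 𝕜) huv.le h
  rw [hsymm] at huv'
  rw [← mul_pow]
  exact sq_le_sq' (by linarith) (by linarith)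

end ProjectionBound

theorem stmt_0_general {H : Type*} [NormedAddCommGroup H] [InnerProductSpace ℂ H]
    (u v : H) (huv : ‖u‖ = ‖v‖) (h : H) :
    (‖(inner ℂ u h : ℂ)‖ - ‖(inner ℂ v h : ℂ)‖) ^ 2 / ‖h‖ ^ 2
      ≤ (‖u‖ ^ 4 - ‖(inner ℂ u v : ℂ)‖ ^ 2) / ‖u‖ ^ 2 := by
  have hrhs : (‖u‖ ^ 4 - ‖(inner ℂ u v : ℂ)‖ ^ 2) / ‖u‖ ^ 2
      = ‖(ℂ ∙ u)ᗮ.starProjection v‖ ^ 2 := by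
    rw [norm_sq_starProjection_orthogonal_singleton, ← huv, sub_div]
    rcases eq_or_ne ‖u‖ 0 with hu | hu
    · simp [hu]
    · field_simp
  rw [hrhs]
  exact div_le_of_le_mul₀ (sq_nonneg _) (sq_nonneg _) (sq_norm_inner_sub_norm_inner_le huv h)

/-- **Projection bound for the Malliavin determinant, first form.**
If `u v : H` in a complex inner product space satisfy `‖u‖ = ‖v‖` and `u ≠ 0`,
then for every nonzero `h`,
`(‖u‖⁴ − |⟨u,v⟩|²)/‖u‖² ≥ (|⟨u,h⟩| − |⟨v,h⟩|)²/‖h‖²`. -/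
theorem stmt_0 {H : Type*} [NormedAddCommGroup H] [InnerProductSpace ℂ H]
    (u v : H) (huv : ‖u‖ = ‖v‖) (hu : u ≠ 0) (h : H) (hh : h ≠ 0) :
    (‖(inner ℂ u h : ℂ)‖ - ‖(inner ℂ v h : ℂ)‖) ^ 2 / ‖h‖ ^ 2
      ≤ (‖u‖ ^ 4 - ‖(inner ℂ u v : ℂ)‖ ^ 2) / ‖u‖ ^ 2 :=
  stmt_0_general u v huv h
end

section
/- Let H be a complex inner product space and let u, v ∈ H satisfy ‖u‖ = ‖v‖. Then for every nonzero h ∈ H one has ‖u‖⁴ − |⟨u, v⟩|² ≥ (|⟨u, h⟩| − |⟨v, h⟩|)⁴/‖h‖⁴. -/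
/-!
Split `u` and `v` along the line `ℂ ∙ h` and its orthogonal complement. With `a, b` the norms of
the components on the line (`a = |⟪u, h⟫| / ‖h‖`) and `p, q` those of the components on
the complement, `a² + p² = b² + q² = ‖u‖²` and `|⟪u, v⟫| ≤ ab + pq`. Lagrange's identity gives
`‖u‖⁴ - (ab + pq)² = (aq - bp)²`, and `(a - b)² ≤ |aq - bp|` is elementary.
-/

open scoped InnerProductSpace

theorem sq_sub_le_abs_mul_sub_mul {a b p q : ℝ} (ha : 0 ≤ a) (hb : 0 ≤ b) (hp : 0 ≤ p)
    (hq : 0 ≤ q) (hN : a ^ 2 + p ^ 2 = b ^ 2 + q ^ 2) : (a - b) ^ 2 ≤ |a * q - b * p| := by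
  wlog hba : b ≤ a generalizing a b p q
  · rw [abs_sub_comm, show (a - b) ^ 2 = (b - a) ^ 2 by ring]
    exact this hb ha hq hp hN.symm (le_of_not_ge hba)
  -- `a ≤ b + q` since `a ^ 2 ≤ b ^ 2 + q ^ 2`, so `(a - b) ^ 2 ≤ (a - b) * q`.
  have hpq : p ≤ q := by nlinarith
  have haq : a ≤ b + q := by nlinarith
  calc (a - b) ^ 2 ≤ (a - b) * q + b * (q - p) := by nlinarith
    _ = a * q - b * p := by ring
    _ ≤ |a * q - b * p| := le_abs_self _

theorem sub_pow_four_le_sq_sub_sq {a b p q t : ℝ} (ha : 0 ≤ a) (hb : 0 ≤ b) (hp : 0 ≤ p)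
    (hq : 0 ≤ q) (ht : 0 ≤ t) (hN : a ^ 2 + p ^ 2 = b ^ 2 + q ^ 2) (hle : t ≤ a * b + p * q) :
    (a - b) ^ 4 ≤ (a ^ 2 + p ^ 2) ^ 2 - t ^ 2 := by
  have key := sq_sub_le_abs_mul_sub_mul ha hb hp hq hN
  have lagrange :
      (a ^ 2 + p ^ 2) * (b ^ 2 + q ^ 2) - (a * b + p * q) ^ 2 = (a * q - b * p) ^ 2 := by
    ring
  calc (a - b) ^ 4 = ((a - b) ^ 2) ^ 2 := by ring
    _ ≤ |a * q - b * p| ^ 2 := pow_le_pow_left₀ (sq_nonneg _) key 2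
    _ = (a ^ 2 + p ^ 2) ^ 2 - (a * b + p * q) ^ 2 := by rw [sq_abs, ← lagrange, hN]; ring
    _ ≤ (a ^ 2 + p ^ 2) ^ 2 - t ^ 2 := by gcongr

namespace Submodule

variable {𝕜 E : Type*} [RCLike 𝕜] [NormedAddCommGroup E] [InnerProductSpace 𝕜 E]

theorem inner_eq_inner_starProjection_add (K : Submodule 𝕜 E) [K.HasOrthogonalProjection]
    (u v : E) :
    ⟪u, v⟫_𝕜 = ⟪K.starProjection u, K.starProjection v⟫_𝕜
      + ⟪Kᗮ.starProjection u, Kᗮ.starProjection v⟫_𝕜 := by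
  nth_rw 1 [← K.starProjection_add_starProjection_orthogonal u,
    ← K.starProjection_add_starProjection_orthogonal v]
  simp only [inner_add_left, inner_add_right,
    K.inner_right_of_mem_orthogonal (K.starProjection_apply_mem _)
      (Kᗮ.starProjection_apply_mem _),
    K.inner_left_of_mem_orthogonal (K.starProjection_apply_mem _)
      (Kᗮ.starProjection_apply_mem _)]
  ring

theorem norm_inner_le_starProjection (K : Submodule 𝕜 E) [K.HasOrthogonalProjection]
    (u v : E) :
    ‖⟪u, v⟫_𝕜‖ ≤ ‖K.starProjection u‖ * ‖K.starProjection v‖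
      + ‖Kᗮ.starProjection u‖ * ‖Kᗮ.starProjection v‖ := by
  rw [K.inner_eq_inner_starProjection_add]
  exact (norm_add_le _ _).trans (add_le_add (norm_inner_le_norm _ _) (norm_inner_le_norm _ _))

theorem norm_starProjection_singleton (h w : E) :
    ‖(𝕜 ∙ h).starProjection w‖ = ‖⟪w, h⟫_𝕜‖ / ‖h‖ := by
  rcases eq_or_ne h 0 with rfl | hh
  · simp
  rw [starProjection_singleton, norm_smul, norm_div, norm_inner_symm]
  simp only [map_pow, norm_pow, norm_algebraMap', norm_norm]
  field_simp

end Submodule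

theorem stmt_1_general {H : Type*} [NormedAddCommGroup H] [InnerProductSpace ℂ H]
    (u v : H) (huv : ‖u‖ = ‖v‖) (h : H) :
    (‖(inner ℂ u h : ℂ)‖ - ‖(inner ℂ v h : ℂ)‖) ^ 4 / ‖h‖ ^ 4
      ≤ ‖u‖ ^ 4 - (‖(inner ℂ u v : ℂ)‖) ^ 2 := by
  have hu := (ℂ ∙ h).norm_sq_eq_add_norm_sq_starProjection u
  have hv := (ℂ ∙ h).norm_sq_eq_add_norm_sq_starProjection v
  have key := sub_pow_four_le_sq_sub_sq (norm_nonneg _) (norm_nonneg _) (norm_nonneg _)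
    (norm_nonneg _) (norm_nonneg _) (by rw [← hu, ← hv, huv]) ((ℂ ∙ h).norm_inner_le_starProjection u v)
  rw [← hu, Submodule.norm_starProjection_singleton, Submodule.norm_starProjection_singleton,
    ← sub_div, div_pow] at key
  calc _ ≤ (‖u‖ ^ 2) ^ 2 - ‖⟪u, v⟫_ℂ‖ ^ 2 := key
    _ = _ := by ring

/-- **Projection bound for the Malliavin determinant, second form.**
If `u v : H` in a complex inner product space satisfy `‖u‖ = ‖v‖`,
then for every nonzero `h`,
`‖u‖⁴ − |⟨u,v⟩|² ≥ (|⟨u,h⟩| − |⟨v,h⟩|)⁴/‖h‖⁴`. -/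
theorem stmt_1 {H : Type*} [NormedAddCommGroup H] [InnerProductSpace ℂ H]
    (u v : H) (huv : ‖u‖ = ‖v‖) (h : H) (hh : h ≠ 0) :
    (‖(inner ℂ u h : ℂ)‖ - ‖(inner ℂ v h : ℂ)‖) ^ 4 / ‖h‖ ^ 4
      ≤ ‖u‖ ^ 4 - (‖(inner ℂ u v : ℂ)‖) ^ 2 :=
  stmt_1_general u v huv h
end

section
/- Let 𝓗 be a real Hilbert space and let T : 𝓗 → 𝓗 be a compact, self-adjoint, continuous linear operator such that ⟨x + T x, x⟩ > 0 for every x ≠ 0. Then there exists ε > 0 such that for every self-adjoint continuous linear operator A : 𝓗 → 𝓗 with operator norm ‖A‖ ≤ ε and every x ≠ 0 one has ⟨x + A x + T x, x⟩ > 0. -/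
/-!
Write `S = 1 + T`. Since `S` is strictly positive, `-1` is not an eigenvalue of the compact
operator `T`, so by the Fredholm alternative `S` is bounded below: `‖x‖ ≤ K ‖S x‖`.
Cauchy–Schwarz for the positive form `⟪S ·, ·⟫` gives `‖S x‖² ≤ ‖S‖ ⟪S x, x⟫`, hence `S` is
coercive, `c ‖x‖² ≤ ⟪S x, x⟫` with `c > 0`, and any self-adjoint `A` with `‖A‖ ≤ c / 2`
changes the form by at most `c ‖x‖² / 2`.
-/

open scoped RealInnerProductSpace NNReal

theorem IsCompactOperator.exists_antilipschitzWith_one_add {𝕜 X : Type*}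
    [NontriviallyNormedField 𝕜] [NormedAddCommGroup X] [NormedSpace 𝕜 X] {T : X →L[𝕜] X}
    (hT : IsCompactOperator T) (h : ∀ x, T x = -x → x = 0) :
    ∃ K, AntilipschitzWith K (1 + T : X →L[𝕜] X) := by
  have hμ : ¬ Module.End.HasEigenvalue (T : Module.End 𝕜 X) (-1) := by
    intro hev
    obtain ⟨x, hx⟩ := hev.exists_hasEigenvector
    refine hx.2 (h x ?_)
    simpa using Module.End.mem_eigenspace_iff.mp hx.1
  obtain ⟨K, hK⟩ := hT.antilipschitz_of_not_hasEigenvalue (neg_ne_zero.mpr one_ne_zero) hμ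
  exact ⟨K, by simpa [sub_eq_add_neg, add_comm] using hK⟩

namespace ContinuousLinearMap

variable {E : Type*} [NormedAddCommGroup E] [InnerProductSpace ℝ E]

theorem abs_inner_apply_self_le (A : E →L[ℝ] E) (x : E) : |⟪A x, x⟫| ≤ ‖A‖ * ‖x‖ ^ 2 :=
  calc |⟪A x, x⟫| ≤ ‖A x‖ * ‖x‖ := abs_real_inner_le_norm _ _
    _ ≤ ‖A‖ * ‖x‖ * ‖x‖ := by gcongr; exact A.le_opNorm x
    _ = ‖A‖ * ‖x‖ ^ 2 := by ring

/-- Cauchy–Schwarz for the form `⟪S x, y⟫`, applied with `y = S x`. -/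
theorem IsPositive.norm_apply_sq_le {S : E →L[ℝ] E} (hS : S.IsPositive) (x : E) :
    ‖S x‖ ^ 2 ≤ ‖S‖ * ⟪S x, x⟫ := by
  let B : LinearMap.BilinForm ℝ E := (innerₗ E).comp (S : E →ₗ[ℝ] E)
  have hcs : ⟪S x, S x⟫ * ⟪S (S x), x⟫ ≤ ⟪S x, x⟫ * ⟪S (S x), S x⟫ :=
    B.apply_mul_apply_le_of_forall_zero_le hS.inner_nonneg_left x (S x)
  rw [hS.inner_left_eq_inner_right (S x) x, real_inner_self_eq_norm_sq] at hcs
  have h : ‖S x‖ ^ 2 * ‖S x‖ ^ 2 ≤ (‖S‖ * ⟪S x, x⟫) * ‖S x‖ ^ 2 :=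
    calc _ ≤ ⟪S x, x⟫ * ⟪S (S x), S x⟫ := hcs
      _ ≤ ⟪S x, x⟫ * (‖S‖ * ‖S x‖ ^ 2) := by
        gcongr
        · exact hS.inner_nonneg_left x
        · exact (le_abs_self _).trans (S.abs_inner_apply_self_le (S x))
      _ = (‖S‖ * ⟪S x, x⟫) * ‖S x‖ ^ 2 := by ring
  rcases (sq_nonneg ‖S x‖).eq_or_lt with h0 | hpos
  · rw [← h0]
    exact mul_nonneg (norm_nonneg _) (hS.inner_nonneg_left x)
  · exact le_of_mul_le_mul_right h hpos

theorem IsPositive.exists_pos_mul_norm_sq_le_inner {S : E →L[ℝ] E} (hS : S.IsPositive)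
    {K : ℝ≥0} (hK : AntilipschitzWith K S) : ∃ c > (0 : ℝ), ∀ x, c * ‖x‖ ^ 2 ≤ ⟪S x, x⟫ := by
  refine ⟨((K : ℝ) ^ 2 * ‖S‖ + 1)⁻¹, by positivity, fun x => ?_⟩
  rw [inv_mul_le_iff₀ (by positivity)]
  calc ‖x‖ ^ 2 ≤ (K * ‖S x‖) ^ 2 := by gcongr; exact S.bound_of_antilipschitz hK x
    _ = K ^ 2 * ‖S x‖ ^ 2 := by ring
    _ ≤ K ^ 2 * (‖S‖ * ⟪S x, x⟫) := by gcongr; exact hS.norm_apply_sq_le x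
    _ ≤ ((K : ℝ) ^ 2 * ‖S‖ + 1) * ⟪S x, x⟫ := by
      rw [← mul_assoc]
      gcongr
      · exact hS.inner_nonneg_left x
      · exact le_add_of_nonneg_right zero_le_one

end ContinuousLinearMap

/-- **Stability of strict positivity of `1 + T` under small self-adjoint
perturbations.** If `T` is a compact self-adjoint operator on a real Hilbert
space with `⟨x + Tx, x⟩ > 0` for all `x ≠ 0`, then there is `ε > 0` such that
`⟨x + Ax + Tx, x⟩ > 0` for all `x ≠ 0` and all self-adjoint `A` with `‖A‖ ≤ ε`. -/
theorem stmt_4 {𝓗 : Type*} [NormedAddCommGroup 𝓗] [InnerProductSpace ℝ 𝓗]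
    [CompleteSpace 𝓗] (T : 𝓗 →L[ℝ] 𝓗)
    (hTcomp : IsCompactOperator T) (hTsa : IsSelfAdjoint T)
    (hTpos : ∀ x : 𝓗, x ≠ 0 → 0 < ⟪x + T x, x⟫) :
    ∃ ε > (0 : ℝ), ∀ A : 𝓗 →L[ℝ] 𝓗, IsSelfAdjoint A → ‖A‖ ≤ ε →
      ∀ x : 𝓗, x ≠ 0 → 0 < ⟪x + A x + T x, x⟫ := by
  have hS : (1 + T).IsPositive := by
    refine (ContinuousLinearMap.isPositive_iff' _).mpr ⟨(IsSelfAdjoint.one _).add hTsa, ?_⟩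
    intro x
    rcases eq_or_ne x 0 with rfl | hx
    · simp
    · exact (hTpos x hx).le
  have hker (x : 𝓗) (hx : T x = -x) : x = 0 := by
    by_contra hx0
    simpa [hx] using hTpos x hx0
  obtain ⟨K, hK⟩ := hTcomp.exists_antilipschitzWith_one_add hker
  obtain ⟨c, hc, hcoer⟩ := hS.exists_pos_mul_norm_sq_le_inner hK
  refine ⟨c / 2, half_pos hc, fun A _ hA x hx => ?_⟩
  have hAx : -(c / 2 * ‖x‖ ^ 2) ≤ ⟪A x, x⟫ :=
    neg_le_of_abs_le <| (A.abs_inner_apply_self_le x).trans (by gcongr)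
  have hsplit : ⟪x + A x + T x, x⟫ = ⟪(1 + T) x, x⟫ + ⟪A x, x⟫ := by
    rw [add_right_comm, inner_add_left]
    rfl
  have hgap : 0 < c / 2 * ‖x‖ ^ 2 := by positivity
  rw [hsplit]
  linarith [hcoer x]
end

section
/- Let d ≥ 1. There exists a constant C > 0, depending only on d, such that for every integer N ≥ 2, every β > 0 and every δ ∈ (0, 1/2], ∫_{B(0,1)^N} ∏_{i=1}^N (min_{j ≠ i} max(δ, |z_i − z_j|))^{−β²/2} dz_1 … dz_N ≤ C^N N^N (log(1/δ))^{N/2} δ^{−max(0, β² − d) N/2}. -/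
/-!
Write `β² = m + γ` with `m = max 0 (β² - d)` and `γ = min β² d`. Since every distance is
truncated at `δ`, the factor of `z_i` is at most `δ^(-m/2) (max δ |z_i - z_j|)^(-γ/2)` for its
nearest neighbour `j`, hence at most `δ^(-m/2)` times the sum over all `j ≠ i`. Expanding the
product gives at most `N^N` terms, one for each fixed-point-free map `σ`, whose integrand
`∏ f(z_i, z_{σ i})` is the weight of the functional graph of `σ`.

Such a weight is integrated one vertex at a time. An isolated vertex or a leaf costs
`∫ f(z, w) dz = O(1)`, because `γ/2 ≤ d/2` is subcritical. Otherwise `σ` permutes the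
remaining vertices, and a vertex on a cycle carries two edges and costs
`∫ f(z, w) f(w', z) dz ≤ ∫ (max δ |z - w|)^(-γ) + (max δ |z - w'|)^(-γ) dz = O(log (1/δ))`,
because `γ ≤ d` is at most critical. So every vertex costs `O(1)` and every two edges cost
`O(log (1/δ))`.
-/

open MeasureTheory Finset Function Metric
open scoped ENNReal

section FunctionalGraph

variable {X ι : Type*}

noncomputable def edgeProd (f : X → X → ℝ≥0∞) (σ : ι → ι) (T : Finset ι) (z : ι → X) : ℝ≥0∞ :=
  ∏ i ∈ T, f (z i) (z (σ i))

variable {f : X → X → ℝ≥0∞} {σ : ι → ι} {T : Finset ι}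

theorem measurable_edgeProd [MeasurableSpace X] (hf : Measurable (uncurry f)) :
    Measurable (edgeProd f σ T) :=
  Finset.measurable_prod _ fun i _ =>
    show Measurable (uncurry f ∘ fun z : ι → X => (z i, z (σ i))) from
      hf.comp ((measurable_pi_apply i).prodMk (measurable_pi_apply (σ i)))

variable [DecidableEq ι]

theorem edgeProd_eq_mul_erase {v : ι} (hv : v ∈ T) (z : ι → X) :
    edgeProd f σ T z = f (z v) (z (σ v)) * edgeProd f σ (T.erase v) z :=
  (mul_prod_erase T _ hv).symm

theorem edgeProd_update_of_notMem {v : ι} (hvT : v ∉ T) (hσv : ∀ i ∈ T, σ i ≠ v)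
    (y : ι → X) (w : X) : edgeProd f σ T (update y v w) = edgeProd f σ T y :=
  prod_congr rfl fun i hi => by
    rw [update_of_ne (ne_of_mem_of_not_mem hi hvT), update_of_ne (hσv i hi)]

theorem edgeProd_update_of_leaf {v : ι} (hvT : v ∈ T) (hσv : ∀ i ∈ T.erase v, σ i ≠ v)
    (hv : σ v ≠ v) (y : ι → X) (w : X) :
    edgeProd f σ T (update y v w) = f w (y (σ v)) * edgeProd f σ (T.erase v) y := by
  rw [edgeProd_eq_mul_erase hvT, edgeProd_update_of_notMem (notMem_erase v T) hσv,
    update_self, update_of_ne hv]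

theorem edgeProd_update_of_cycle {u v : ι} (hvT : v ∈ T) (hu : u ∈ T.erase v) (huv : σ u = v)
    (hσv : ∀ i ∈ (T.erase v).erase u, σ i ≠ v) (hv : σ v ≠ v) (y : ι → X) (w : X) :
    edgeProd f σ T (update y v w) =
      f w (y (σ v)) * f (y u) w * edgeProd f σ ((T.erase v).erase u) y := by
  have hvT' : v ∉ (T.erase v).erase u := fun h => notMem_erase v T (mem_of_mem_erase h)
  rw [edgeProd_eq_mul_erase hvT, edgeProd_eq_mul_erase hu,
    edgeProd_update_of_notMem hvT' hσv, update_self, update_of_ne hv,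
    update_of_ne (ne_of_mem_erase hu), huv, update_self, mul_assoc]

theorem exists_free_or_leaf_or_cycle {S : Finset ι} (hTS : T ⊆ S)
    (hS : S.Nonempty) :
    (∃ v ∈ S, v ∉ T ∧ ∀ i ∈ T, σ i ≠ v) ∨ (∃ v ∈ T, ∀ i ∈ T.erase v, σ i ≠ v) ∨
      (∃ v ∈ T, ∃ u ∈ T.erase v, σ u = v ∧ Set.InjOn σ T) := by
  by_contra! h
  obtain ⟨hfree, hleaf, hcycle⟩ := h
  have hS_sub : S ⊆ T.image σ := fun v hv => by
    by_cases hvT : v ∈ T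
    · obtain ⟨i, hi, rfl⟩ := hleaf v hvT
      exact mem_image_of_mem σ (mem_of_mem_erase hi)
    · obtain ⟨i, hi, rfl⟩ := hfree v hv hvT
      exact mem_image_of_mem σ hi
  have hcard : #(T.image σ) = #T :=
    le_antisymm card_image_le ((card_le_card hTS).trans (card_le_card hS_sub))
  obtain ⟨v, hv⟩ : T.Nonempty := by
    rw [← card_pos, ← hcard]; exact (card_pos.mpr hS).trans_le (card_le_card hS_sub)
  obtain ⟨u, hu, huv⟩ := hleaf v hv
  exact hcycle v hv u hu huv (card_image_iff.mp hcard)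

variable [MeasurableSpace X] {μ : Measure X} {M L : ℝ≥0∞}

theorem lmarginal_le_mul_lmarginal_erase [SigmaFinite μ] {F G : (ι → X) → ℝ≥0∞}
    (hF : Measurable F) (hG : Measurable G) {S : Finset ι} {v : ι} (hv : v ∈ S) {c : ℝ≥0∞}
    (h : ∀ y, ∫⁻ w, F (update y v w) ∂μ ≤ c * G y) (x : ι → X) :
    (∫⋯∫⁻_S, F ∂fun _ => μ) x ≤ c * (∫⋯∫⁻_(S.erase v), G ∂fun _ => μ) x := by
  rw [lmarginal_erase' F hF hv]
  calc _ ≤ (∫⋯∫⁻_(S.erase v), (fun y => c * G y) ∂fun _ => μ) x := lmarginal_mono h x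
    _ = _ := lintegral_const_mul c (hG.comp measurable_updateFinset)

theorem lintegral_edgeProd_update_of_notMem {v : ι} (hvT : v ∉ T) (hσv : ∀ i ∈ T, σ i ≠ v)
    (y : ι → X) : ∫⁻ w, edgeProd f σ T (update y v w) ∂μ = μ Set.univ * edgeProd f σ T y := by
  simp_rw [edgeProd_update_of_notMem hvT hσv, lintegral_const, mul_comm]

theorem lintegral_edgeProd_update_of_leaf (hf : Measurable (uncurry f))
    (hA : ∀ w, ∫⁻ z, f z w ∂μ ≤ M) {v : ι} (hvT : v ∈ T) (hσv : ∀ i ∈ T.erase v, σ i ≠ v)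
    (hv : σ v ≠ v) (y : ι → X) :
    ∫⁻ w, edgeProd f σ T (update y v w) ∂μ ≤ M * edgeProd f σ (T.erase v) y := by
  simp_rw [edgeProd_update_of_leaf hvT hσv hv]
  rw [lintegral_mul_const _ hf.of_uncurry_right]
  exact mul_le_mul_left (hA _) _

theorem lintegral_edgeProd_update_of_cycle (hf : Measurable (uncurry f))
    (hB : ∀ w w', ∫⁻ z, f z w * f w' z ∂μ ≤ M * L) {u v : ι} (hvT : v ∈ T) (hu : u ∈ T.erase v)
    (huv : σ u = v) (hσv : ∀ i ∈ (T.erase v).erase u, σ i ≠ v) (hv : σ v ≠ v) (y : ι → X) :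
    ∫⁻ w, edgeProd f σ T (update y v w) ∂μ ≤ M * L * edgeProd f σ ((T.erase v).erase u) y := by
  simp_rw [edgeProd_update_of_cycle hvT hu huv hσv hv]
  rw [lintegral_mul_const _ (f := fun w => f w (y (σ v)) * f (y u) w)
    (hf.of_uncurry_right.mul hf.of_uncurry_left)]
  exact mul_le_mul_left (hB _ _) _

theorem lmarginal_edgeProd_le [SigmaFinite μ] (hf : Measurable (uncurry f)) (hL : 1 ≤ L)
    (hV : μ Set.univ ≤ M) (hA : ∀ w, ∫⁻ z, f z w ∂μ ≤ M)
    (hB : ∀ w w', ∫⁻ z, f z w * f w' z ∂μ ≤ M * L) (S : Finset ι) (hTS : T ⊆ S)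
    (hσS : ∀ i ∈ T, σ i ∈ S) (hσ : ∀ i ∈ T, σ i ≠ i) (x : ι → X) :
    (∫⋯∫⁻_S, edgeProd f σ T ∂fun _ => μ) x ≤ M ^ #S * L ^ (#T / 2) := by
  induction S using Finset.strongInduction generalizing T with
  | H S ih =>
  have peel : ∀ v ∈ S, ∀ (T' : Finset ι) (c : ℝ≥0∞),
      (∀ y, ∫⁻ w, edgeProd f σ T (update y v w) ∂μ ≤ c * edgeProd f σ T' y) →
      T' ⊆ S.erase v → (∀ i ∈ T', σ i ∈ S.erase v) → (∀ i ∈ T', σ i ≠ i) →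
      (∫⋯∫⁻_S, edgeProd f σ T ∂fun _ => μ) x ≤ c * (M ^ #(S.erase v) * L ^ (#T' / 2)) :=
    fun v hv T' c h hT'S hσT' hσ' =>
      (lmarginal_le_mul_lmarginal_erase (measurable_edgeProd hf) (measurable_edgeProd hf) hv h
        x).trans (by gcongr; exact ih _ (erase_ssubset hv) hT'S hσT' hσ')
  rcases S.eq_empty_or_nonempty with rfl | hS
  · simp [subset_empty.mp hTS, edgeProd]
  rcases exists_free_or_leaf_or_cycle hTS hS with ⟨v, hvS, hvT, hσv⟩ | ⟨v, hvT, hσv⟩ |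
    ⟨v, hvT, u, hu, huv, hinj⟩
  · calc _ ≤ μ Set.univ * (M ^ #(S.erase v) * L ^ (#T / 2)) :=
          peel v hvS T _ (fun y => (lintegral_edgeProd_update_of_notMem hvT hσv y).le)
            (fun i hi => mem_erase.mpr ⟨ne_of_mem_of_not_mem hi hvT, hTS hi⟩)
            (fun i hi => mem_erase.mpr ⟨hσv i hi, hσS i hi⟩) hσ
      _ ≤ M * (M ^ #(S.erase v) * L ^ (#T / 2)) := by gcongr
      _ = _ := by rw [← card_erase_add_one hvS, pow_succ]; ring
  · have hvS := hTS hvT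
    calc _ ≤ M * (M ^ #(S.erase v) * L ^ (#(T.erase v) / 2)) :=
          peel v hvS _ M (lintegral_edgeProd_update_of_leaf hf hA hvT hσv (hσ v hvT))
            (erase_subset_erase v hTS)
            (fun i hi => mem_erase.mpr ⟨hσv i hi, hσS i (mem_of_mem_erase hi)⟩)
            (fun i hi => hσ i (mem_of_mem_erase hi))
      _ ≤ _ := by
          rw [← card_erase_add_one hvS, pow_succ, mul_comm _ M, mul_assoc]
          gcongr
          exact erase_subset v T
  · have hvS := hTS hvT
    have hσv : ∀ i ∈ (T.erase v).erase u, σ i ≠ v := fun i hi hiv =>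
      ne_of_mem_erase hi (hinj (mem_of_mem_erase (mem_of_mem_erase hi))
        (mem_of_mem_erase hu) (hiv.trans huv.symm))
    calc _ ≤ M * L * (M ^ #(S.erase v) * L ^ (#((T.erase v).erase u) / 2)) :=
          peel v hvS _ _ (lintegral_edgeProd_update_of_cycle hf hB hvT hu huv hσv (hσ v hvT))
            (fun i hi => erase_subset_erase v hTS (mem_of_mem_erase hi))
            (fun i hi => mem_erase.mpr
              ⟨hσv i hi, hσS i (mem_of_mem_erase (mem_of_mem_erase hi))⟩)
            (fun i hi => hσ i (mem_of_mem_erase (mem_of_mem_erase hi)))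
      _ = _ := by
          have hT : #T / 2 = #((T.erase v).erase u) / 2 + 1 := by
            rw [← card_erase_add_one hvT, ← card_erase_add_one hu]; omega
          rw [hT, ← card_erase_add_one hvS, pow_succ, pow_succ]
          ring

theorem lintegral_edgeProd_le [Fintype ι] [SigmaFinite μ] (hf : Measurable (uncurry f))
    (hL : 1 ≤ L) (hV : μ Set.univ ≤ M) (hA : ∀ w, ∫⁻ z, f z w ∂μ ≤ M)
    (hB : ∀ w w', ∫⁻ z, f z w * f w' z ∂μ ≤ M * L) (hσ : ∀ i, σ i ≠ i) :
    ∫⁻ z, edgeProd f σ univ z ∂Measure.pi (fun _ : ι => μ) ≤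
      M ^ Fintype.card ι * L ^ (Fintype.card ι / 2) := by
  rcases isEmpty_or_nonempty (ι → X) with h | ⟨⟨x⟩⟩
  · simp [lintegral_of_isEmpty]
  rw [lintegral_eq_lmarginal_univ x, ← card_univ]
  exact lmarginal_edgeProd_le hf hL hV hA hB univ (subset_univ _) (fun i _ => mem_univ _)
    (fun i _ => hσ i) x

theorem lintegral_sum_edgeProd_le [Fintype ι] [SigmaFinite μ] (hf : Measurable (uncurry f))
    (hL : 1 ≤ L) (hV : μ Set.univ ≤ M) (hA : ∀ w, ∫⁻ z, f z w ∂μ ≤ M)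
    (hB : ∀ w w', ∫⁻ z, f z w * f w' z ∂μ ≤ M * L) :
    ∫⁻ z, ∑ σ ∈ Fintype.piFinset (fun i : ι => univ.erase i), edgeProd f σ univ z
        ∂Measure.pi (fun _ : ι => μ) ≤
      Fintype.card ι ^ Fintype.card ι * (M ^ Fintype.card ι * L ^ (Fintype.card ι / 2)) := by
  rw [lintegral_finsetSum _ fun σ _ => measurable_edgeProd hf]
  calc _ ≤ ∑ _σ ∈ Fintype.piFinset (fun i : ι => univ.erase i),
          M ^ Fintype.card ι * L ^ (Fintype.card ι / 2) :=
        sum_le_sum fun σ hσ => lintegral_edgeProd_le hf hL hV hA hB fun i =>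
          ne_of_mem_erase (Fintype.mem_piFinset.mp hσ i)
    _ ≤ _ := by
        rw [sum_const, nsmul_eq_mul, Fintype.card_piFinset, ← card_univ]
        gcongr
        exact_mod_cast prod_le_pow_card _ _ _ fun i _ => card_le_univ _

end FunctionalGraph

section NearestNeighbour

variable {X : Type*} [PseudoMetricSpace X]

noncomputable def truncKernel (δ s : ℝ) (a b : X) : ℝ≥0∞ :=
  ENNReal.ofReal (max δ (dist a b) ^ (-s))

theorem continuous_uncurry_truncKernel {δ : ℝ} (hδ : 0 < δ) (s : ℝ) :
    Continuous (uncurry (truncKernel (X := X) δ s)) :=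
  ENNReal.continuous_ofReal.comp <|
    (continuous_const.max continuous_dist).rpow_const fun _ => Or.inl (lt_max_of_lt_left hδ).ne'

theorem truncKernel_mul_le {δ : ℝ} (hδ : 0 < δ) (s : ℝ) (z w w' : X) :
    truncKernel δ (s / 2) z w * truncKernel δ (s / 2) w' z ≤
      truncKernel δ s z w + truncKernel δ s z w' := by
  have hsq : ∀ a b : X, (max δ (dist a b) ^ (-(s / 2))) ^ 2 = max δ (dist a b) ^ (-s) :=
    fun a b => by
      rw [← Real.rpow_mul_natCast (lt_max_of_lt_left hδ).le]
      norm_num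
  simp only [truncKernel]
  rw [← ENNReal.ofReal_mul (by positivity), ← ENNReal.ofReal_add (by positivity) (by positivity),
    ← hsq z w, ← hsq z w', dist_comm w' z]
  refine ENNReal.ofReal_le_ofReal ?_
  have hx : 0 ≤ max δ (dist z w) ^ (-(s / 2)) := by positivity
  have hy : 0 ≤ max δ (dist z w') ^ (-(s / 2)) := by positivity
  nlinarith [sq_nonneg (max δ (dist z w) ^ (-(s / 2)) - max δ (dist z w') ^ (-(s / 2)))]

variable {ι : Type*} [Fintype ι] [DecidableEq ι] [Nontrivial ι] {δ a b : ℝ}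

theorem ofReal_iInf_rpow_neg_le (hδ : 0 < δ) (ha : 0 ≤ a) (z : ι → X) (i : ι) :
    ENNReal.ofReal ((⨅ j : {j // j ≠ i}, max δ (dist (z i) (z j))) ^ (-(a + b))) ≤
      ENNReal.ofReal (δ ^ (-a)) * ∑ j ∈ univ.erase i, truncKernel δ b (z i) (z j) := by
  have : Nonempty {j // j ≠ i} := let ⟨j, hj⟩ := exists_ne i; ⟨⟨j, hj⟩⟩
  obtain ⟨j, hj⟩ :=
    exists_eq_ciInf_of_finite (f := fun j : {j // j ≠ i} => max δ (dist (z i) (z j)))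
  rw [← hj]
  have hr : 0 < max δ (dist (z i) (z j)) := lt_max_of_lt_left hδ
  calc _ = ENNReal.ofReal (max δ (dist (z i) (z j)) ^ (-a)) * truncKernel δ b (z i) (z j) := by
        rw [truncKernel, ← ENNReal.ofReal_mul (by positivity), neg_add, Real.rpow_add hr]
    _ ≤ ENNReal.ofReal (δ ^ (-a)) * truncKernel δ b (z i) (z j) :=
        mul_le_mul_of_nonneg_right (ENNReal.ofReal_le_ofReal
          (Real.rpow_le_rpow_of_nonpos hδ (le_max_left _ _) (neg_nonpos.mpr ha))) zero_le
    _ ≤ _ := by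
        gcongr
        exact single_le_sum (f := fun j => truncKernel δ b (z i) (z j)) (fun _ _ => by positivity)
          (mem_erase.mpr ⟨j.2, mem_univ _⟩)

theorem ofReal_prod_iInf_rpow_neg_le (hδ : 0 < δ) (ha : 0 ≤ a) (z : ι → X) :
    ENNReal.ofReal (∏ i, (⨅ j : {j // j ≠ i}, max δ (dist (z i) (z j))) ^ (-(a + b))) ≤
      ENNReal.ofReal (δ ^ (-a)) ^ Fintype.card ι *
        ∑ σ ∈ Fintype.piFinset (fun i : ι => univ.erase i),
          edgeProd (truncKernel δ b) σ univ z := by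
  rw [ENNReal.ofReal_prod_of_nonneg fun i _ =>
    Real.rpow_nonneg (Real.iInf_nonneg fun j => le_max_of_le_left hδ.le) _]
  calc _ ≤ ∏ i, ENNReal.ofReal (δ ^ (-a)) * ∑ j ∈ univ.erase i, truncKernel δ b (z i) (z j) :=
        prod_le_prod' fun i _ => ofReal_iInf_rpow_neg_le hδ ha z i
    _ = _ := by rw [prod_mul_distrib, prod_const, card_univ, prod_univ_sum]; rfl

theorem lintegral_prod_iInf_rpow_neg_le [MeasurableSpace X] [BorelSpace X]
    [SecondCountableTopology X] {μ : Measure X} [SigmaFinite μ] {M L : ℝ≥0∞}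
    (hδ : 0 < δ) (ha : 0 ≤ a) (hL : 1 ≤ L) (hV : μ Set.univ ≤ M)
    (hA : ∀ w, ∫⁻ z, truncKernel δ b z w ∂μ ≤ M)
    (hB : ∀ w w', ∫⁻ z, truncKernel δ b z w * truncKernel δ b w' z ∂μ ≤ M * L) :
    ∫⁻ z, ENNReal.ofReal (∏ i, (⨅ j : {j // j ≠ i}, max δ (dist (z i) (z j))) ^ (-(a + b)))
        ∂Measure.pi (fun _ : ι => μ) ≤
      ENNReal.ofReal (δ ^ (-a)) ^ Fintype.card ι * (Fintype.card ι ^ Fintype.card ι *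
        (M ^ Fintype.card ι * L ^ (Fintype.card ι / 2))) :=
  calc _ ≤ ∫⁻ z, ENNReal.ofReal (δ ^ (-a)) ^ Fintype.card ι * ∑ σ ∈ Fintype.piFinset
          (fun i : ι => univ.erase i), edgeProd (truncKernel δ b) σ univ z
          ∂Measure.pi (fun _ : ι => μ) :=
        lintegral_mono fun z => ofReal_prod_iInf_rpow_neg_le hδ ha z
    _ = _ := lintegral_const_mul' _ _ (ENNReal.pow_ne_top ENNReal.ofReal_ne_top)
    _ ≤ _ := by
        gcongr
        exact lintegral_sum_edgeProd_le (continuous_uncurry_truncKernel hδ b).measurable hL hV hA hB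

end NearestNeighbour

section DyadicBound

theorem exists_dyadic_scale {δ ρ γ : ℝ} {K : ℕ} (hγ : 0 ≤ γ) (hK : ((2 : ℝ) ^ (K + 1))⁻¹ ≤ δ)
    (hδρ : δ ≤ ρ) (hρ : ρ < 1) :
    ∃ k ≤ K, ρ ≤ ((2 : ℝ) ^ k)⁻¹ ∧ ρ ^ (-γ) ≤ ((2 : ℝ) ^ γ) ^ (k + 1) := by
  have hρ0 : 0 < ρ := (inv_pos.mpr (by positivity)).trans_le (hK.trans hδρ)
  obtain ⟨n, hn, hn'⟩ := exists_nat_pow_near (one_le_inv₀ hρ0 |>.mpr hρ.le) one_lt_two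
  have hlow : ((2 : ℝ) ^ (min n K + 1))⁻¹ ≤ ρ := by
    rcases min_cases n K with ⟨h, -⟩ | ⟨h, -⟩ <;> rw [h]
    · exact (inv_le_comm₀ (by positivity) hρ0).mpr hn'.le
    · exact hK.trans hδρ
  refine ⟨min n K, min_le_right _ _, ?_, ?_⟩
  · calc ρ ≤ ((2 : ℝ) ^ n)⁻¹ := (le_inv_comm₀ hρ0 (by positivity)).mpr hn
      _ ≤ ((2 : ℝ) ^ min n K)⁻¹ := by gcongr; exacts [one_le_two, min_le_left _ _]
  · calc ρ ^ (-γ) ≤ (((2 : ℝ) ^ (min n K + 1))⁻¹) ^ (-γ) :=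
          Real.rpow_le_rpow_of_nonpos (by positivity) hlow (neg_nonpos.mpr hγ)
      _ = ((2 : ℝ) ^ γ) ^ (min n K + 1) := by
          rw [Real.inv_rpow (by positivity), Real.rpow_neg (by positivity), inv_inv,
            Real.rpow_pow_comm zero_le_two]

theorem exists_dyadic_index {δ : ℝ} (hδ : 0 < δ) (hδ1 : δ ≤ 1) :
    ∃ K : ℕ, ((2 : ℝ) ^ (K + 1))⁻¹ ≤ δ ∧ (K : ℝ) ≤ 2 * Real.log (1 / δ) := by
  obtain ⟨K, hK, hK'⟩ := exists_nat_pow_near (one_le_one_div hδ hδ1) one_lt_two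
  refine ⟨K, (inv_le_comm₀ (by positivity) hδ).mpr (by rw [← one_div]; exact hK'.le), ?_⟩
  have hlog : (K : ℝ) * Real.log 2 ≤ Real.log (1 / δ) := by
    rw [← Real.log_pow]; exact Real.log_le_log (by positivity) hK
  nlinarith [Real.log_two_gt_d9, Nat.cast_nonneg (α := ℝ) K]

theorem half_lt_log_one_div {δ : ℝ} (hδ : 0 < δ) (hδ2 : δ ≤ 1 / 2) : 1 / 2 < Real.log (1 / δ) := by
  refine Real.log_two_gt_d9.trans' (by norm_num) |>.trans_le (Real.log_le_log two_pos ?_)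
  rw [le_div_iff₀ hδ]; linarith

theorem truncKernel_le_one_add_sum {X : Type*} [PseudoMetricSpace X] {δ γ : ℝ} {K : ℕ}
    (hγ : 0 ≤ γ) (hK : ((2 : ℝ) ^ (K + 1))⁻¹ ≤ δ) (z w : X) :
    truncKernel δ γ z w ≤ 1 + ∑ k ∈ range (K + 1),
      (closedBall w ((2 : ℝ) ^ k)⁻¹).indicator (fun _ => ENNReal.ofReal ((2 ^ γ) ^ (k + 1))) z := by
  rcases le_or_gt 1 (max δ (dist z w)) with h1 | h1
  · refine le_add_right (ENNReal.ofReal_le_one.mpr ?_)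
    exact Real.rpow_le_one_of_one_le_of_nonpos h1 (neg_nonpos.mpr hγ)
  obtain ⟨k, hkK, hdist, hval⟩ := exists_dyadic_scale hγ hK (le_max_left _ _) h1
  refine le_add_left ((ENNReal.ofReal_le_ofReal hval).trans ?_)
  refine le_of_eq_of_le ?_ (single_le_sum (fun _ _ => by positivity)
    (mem_range.mpr (Nat.lt_succ_of_le hkK)))
  rw [Set.indicator_of_mem (mem_closedBall.mpr ((le_max_right _ _).trans hdist))]

variable {E : Type*} [NormedAddCommGroup E] [NormedSpace ℝ E] [FiniteDimensional ℝ E]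
  [MeasurableSpace E] [BorelSpace E] (μ : Measure E) [μ.IsAddHaarMeasure]

theorem setLIntegral_truncKernel_le {δ γ : ℝ} {K : ℕ} (hγ : 0 ≤ γ)
    (hK : ((2 : ℝ) ^ (K + 1))⁻¹ ≤ δ) (s : Set E) (w : E) :
    ∫⁻ z in s, truncKernel δ γ z w ∂μ ≤ μ s + ENNReal.ofReal (∑ k ∈ range (K + 1),
      2 ^ γ * (2 ^ γ / 2 ^ Module.finrank ℝ E) ^ k) * μ (ball 0 1) := by
  calc _ ≤ ∫⁻ z in s, (1 + ∑ k ∈ range (K + 1), (closedBall w ((2 : ℝ) ^ k)⁻¹).indicator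
          (fun _ => ENNReal.ofReal ((2 ^ γ) ^ (k + 1))) z) ∂μ :=
        lintegral_mono fun z => truncKernel_le_one_add_sum hγ hK z w
    _ ≤ μ s + ∑ k ∈ range (K + 1), ∫⁻ z, (closedBall w ((2 : ℝ) ^ k)⁻¹).indicator
          (fun _ => ENNReal.ofReal ((2 ^ γ) ^ (k + 1))) z ∂μ := by
        rw [lintegral_add_left measurable_const, setLIntegral_const, one_mul,
          lintegral_finsetSum _ fun k _ => measurable_const.indicator measurableSet_closedBall]
        gcongr with k
        exact Measure.restrict_le_self
    _ = _ := by
        simp_rw [lintegral_indicator_const measurableSet_closedBall,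
          Measure.addHaar_closedBall μ w (inv_nonneg.mpr (pow_nonneg zero_le_two _))]
        rw [ENNReal.ofReal_sum_of_nonneg fun k _ => by positivity, sum_mul]
        refine congrArg _ (sum_congr rfl fun k _ => ?_)
        rw [← mul_assoc, ← ENNReal.ofReal_mul (by positivity)]
        congr 2
        ring

theorem sum_geom_le_of_two_mul_le {γ : ℝ} {d : ℕ} (hd : 1 ≤ d) (h2γ : 2 * γ ≤ d) (n : ℕ) :
    ∑ k ∈ range n, (2 : ℝ) ^ γ * ((2 : ℝ) ^ γ / 2 ^ d) ^ k ≤ 4 * 2 ^ d := by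
  have hsq : ((2 : ℝ) ^ γ) ^ 2 ≤ 2 ^ d := by
    rw [← Real.rpow_mul_natCast zero_le_two, ← Real.rpow_natCast]
    exact Real.rpow_le_rpow_of_exponent_le one_le_two (by push_cast; linarith)
  have h2d : (2 : ℝ) ≤ 2 ^ d := le_self_pow₀ one_le_two (by omega)
  have hq0 : 0 ≤ (2 : ℝ) ^ γ / 2 ^ d := by positivity
  have hq : (2 : ℝ) ^ γ / 2 ^ d ≤ 3 / 4 := by
    have : ((2 : ℝ) ^ γ / 2 ^ d) ^ 2 ≤ 1 / 2 := by
      rw [div_pow, div_le_iff₀ (by positivity)]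
      nlinarith
    nlinarith
  have hgeom : ∑ k ∈ range n, ((2 : ℝ) ^ γ / 2 ^ d) ^ k ≤ 4 := by
    rw [range_eq_Ico]
    refine (geom_sum_Ico_le_of_lt_one hq0 (by linarith)).trans ?_
    rw [pow_zero, div_le_iff₀ (by linarith)]
    linarith
  rw [← mul_sum]
  nlinarith [Real.rpow_nonneg zero_le_two γ]

theorem sum_geom_le_of_le {γ : ℝ} {d : ℕ} (hγd : γ ≤ d) (n : ℕ) :
    ∑ k ∈ range n, (2 : ℝ) ^ γ * ((2 : ℝ) ^ γ / 2 ^ d) ^ k ≤ n * 2 ^ d := by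
  have h2γ : (2 : ℝ) ^ γ ≤ 2 ^ d := by
    rw [← Real.rpow_natCast]; exact Real.rpow_le_rpow_of_exponent_le one_le_two hγd
  have hterm : ∀ k ∈ range n, (2 : ℝ) ^ γ * ((2 : ℝ) ^ γ / 2 ^ d) ^ k ≤ 2 ^ d := fun k _ => by
    refine le_trans ?_ h2γ
    refine mul_le_of_le_one_right (by positivity) (pow_le_one₀ (by positivity) ?_)
    exact (div_le_one (by positivity)).mpr h2γ
  simpa using sum_le_card_nsmul _ _ _ hterm

end DyadicBound

section KernelBounds

variable {E : Type*} [NormedAddCommGroup E] [NormedSpace ℝ E] [MeasurableSpace E]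

/-- With `ω` the volume of the unit ball, `12 (ω + 1) 2^d` dominates the subcritical kernel
bound `ω (1 + 4·2^d)` and, since `K + 2 ≤ 6 log (1/δ)`, the critical one `2 ω (1 + (K + 1) 2^d)`
divided by `log (1/δ)`. -/
noncomputable def kernelConst (μ : Measure E) : ℝ :=
  12 * ((μ (ball 0 1)).toReal + 1) * 2 ^ Module.finrank ℝ E

theorem one_le_kernelConst (μ : Measure E) : 1 ≤ kernelConst μ := by
  have : (1 : ℝ) ≤ 2 ^ Module.finrank ℝ E := one_le_pow₀ one_le_two
  unfold kernelConst
  nlinarith [ENNReal.toReal_nonneg (a := μ (ball 0 1))]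

theorem one_le_kernelConst_mul_log (μ : Measure E) {δ : ℝ} (hδ : 0 < δ) (hδ2 : δ ≤ 1 / 2) :
    1 ≤ kernelConst μ * Real.log (1 / δ) := by
  have : (1 : ℝ) ≤ 2 ^ Module.finrank ℝ E := one_le_pow₀ one_le_two
  have := half_lt_log_one_div hδ hδ2
  have : 12 ≤ kernelConst μ := by
    unfold kernelConst
    nlinarith [ENNReal.toReal_nonneg (a := μ (ball 0 1))]
  nlinarith

variable [FiniteDimensional ℝ E] (μ : Measure E) [μ.IsAddHaarMeasure]

theorem measure_ball_le_kernelConst : μ (ball 0 1) ≤ ENNReal.ofReal (kernelConst μ) := by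
  rw [← ENNReal.ofReal_toReal measure_ball_lt_top.ne]
  refine ENNReal.ofReal_le_ofReal ?_
  have : (1 : ℝ) ≤ 2 ^ Module.finrank ℝ E := one_le_pow₀ one_le_two
  unfold kernelConst
  nlinarith [ENNReal.toReal_nonneg (a := μ (ball 0 1))]

variable [BorelSpace E] {δ γ : ℝ}

theorem setLIntegral_ball_truncKernel_le_ofReal (hγ : 0 ≤ γ) {K : ℕ}
    (hK : ((2 : ℝ) ^ (K + 1))⁻¹ ≤ δ) (w : E) :
    ∫⁻ z in ball 0 1, truncKernel δ γ z w ∂μ ≤ ENNReal.ofReal ((μ (ball 0 1)).toReal *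
      (1 + ∑ k ∈ range (K + 1), 2 ^ γ * (2 ^ γ / 2 ^ Module.finrank ℝ E) ^ k)) := by
  refine (setLIntegral_truncKernel_le μ hγ hK _ w).trans_eq ?_
  rw [mul_add, mul_one, ENNReal.ofReal_add ENNReal.toReal_nonneg (by positivity),
    ENNReal.ofReal_mul ENNReal.toReal_nonneg, ENNReal.ofReal_toReal measure_ball_lt_top.ne,
    mul_comm]

theorem setLIntegral_ball_truncKernel_le (hd : 1 ≤ Module.finrank ℝ E) (hδ : 0 < δ)
    (hδ1 : δ ≤ 1) (hγ : 0 ≤ γ) (hγd : γ ≤ Module.finrank ℝ E) (w : E) :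
    ∫⁻ z in ball 0 1, truncKernel δ (γ / 2) z w ∂μ ≤ ENNReal.ofReal (kernelConst μ) := by
  obtain ⟨K, hK, -⟩ := exists_dyadic_index hδ hδ1
  refine (setLIntegral_ball_truncKernel_le_ofReal μ (by positivity) hK w).trans
    (ENNReal.ofReal_le_ofReal ?_)
  have hsum := sum_geom_le_of_two_mul_le hd (γ := γ / 2) (by linarith) (K + 1)
  have : (1 : ℝ) ≤ 2 ^ Module.finrank ℝ E := one_le_pow₀ one_le_two
  unfold kernelConst
  nlinarith [ENNReal.toReal_nonneg (a := μ (ball 0 1))]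

/-- The logarithm counts the dyadic scales between `δ` and `1`, each of which contributes
`O(1)` to the critical integral. -/
theorem setLIntegral_ball_truncKernel_mul_le (hδ : 0 < δ) (hδ2 : δ ≤ 1 / 2) (hγ : 0 ≤ γ)
    (hγd : γ ≤ Module.finrank ℝ E) (w w' : E) :
    ∫⁻ z in ball 0 1, truncKernel δ (γ / 2) z w * truncKernel δ (γ / 2) w' z ∂μ ≤
      ENNReal.ofReal (kernelConst μ * Real.log (1 / δ)) := by
  obtain ⟨K, hK, hKΛ⟩ := exists_dyadic_index hδ (by linarith)
  have hΛ := half_lt_log_one_div hδ hδ2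
  have hsum := sum_geom_le_of_le hγd (K + 1)
  have hmeas : Measurable fun z => truncKernel δ γ z w :=
    (continuous_uncurry_truncKernel hδ γ).measurable.of_uncurry_right
  calc _ ≤ ∫⁻ z in ball 0 1, (truncKernel δ γ z w + truncKernel δ γ z w') ∂μ :=
        lintegral_mono fun z => truncKernel_mul_le hδ γ z w w'
    _ = _ := lintegral_add_left hmeas _
    _ ≤ _ := add_le_add (setLIntegral_ball_truncKernel_le_ofReal μ hγ hK w)
        (setLIntegral_ball_truncKernel_le_ofReal μ hγ hK w')
    _ ≤ _ := by
        rw [← ENNReal.ofReal_add (by positivity) (by positivity)]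
        refine ENNReal.ofReal_le_ofReal ?_
        have h2d : (1 : ℝ) ≤ 2 ^ Module.finrank ℝ E := one_le_pow₀ one_le_two
        have hω := ENNReal.toReal_nonneg (a := μ (ball 0 1))
        push_cast at hsum
        unfold kernelConst
        nlinarith [mul_nonneg hω (sub_nonneg.mpr h2d)]

end KernelBounds

theorem ofReal_pow_mul_le {p A Λ : ℝ} (hp : 0 ≤ p) (hA : 1 ≤ A) (hΛ : 0 ≤ Λ) (hAΛ : 1 ≤ A * Λ)
    (N : ℕ) :
    ENNReal.ofReal p ^ N * (N ^ N * (ENNReal.ofReal A ^ N * ENNReal.ofReal (A * Λ) ^ (N / 2))) ≤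
      ENNReal.ofReal ((A ^ 2) ^ N * N ^ N * Λ ^ ((N : ℝ) / 2) * p ^ N) := by
  have hhalf : (A * Λ) ^ (N / 2) ≤ A ^ N * Λ ^ ((N : ℝ) / 2) :=
    calc (A * Λ) ^ (N / 2) = (A * Λ) ^ ((N / 2 : ℕ) : ℝ) := (Real.rpow_natCast _ _).symm
      _ ≤ (A * Λ) ^ ((N : ℝ) / 2) := Real.rpow_le_rpow_of_exponent_le hAΛ Nat.cast_div_le
      _ = A ^ ((N : ℝ) / 2) * Λ ^ ((N : ℝ) / 2) := Real.mul_rpow (by linarith) hΛ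
      _ ≤ A ^ (N : ℝ) * Λ ^ ((N : ℝ) / 2) := by
          have : (N : ℝ) / 2 ≤ N := by linarith [Nat.cast_nonneg (α := ℝ) N]
          gcongr
      _ = A ^ N * Λ ^ ((N : ℝ) / 2) := by rw [Real.rpow_natCast]
  rw [← ENNReal.ofReal_pow hp, ← ENNReal.ofReal_natCast, ← ENNReal.ofReal_pow (by positivity),
    ← ENNReal.ofReal_pow (by linarith), ← ENNReal.ofReal_pow (by nlinarith),
    ← ENNReal.ofReal_mul (by positivity), ← ENNReal.ofReal_mul (by positivity),
    ← ENNReal.ofReal_mul (by positivity)]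
  refine ENNReal.ofReal_le_ofReal ?_
  calc p ^ N * (N ^ N * (A ^ N * (A * Λ) ^ (N / 2)))
      ≤ p ^ N * (N ^ N * (A ^ N * (A ^ N * Λ ^ ((N : ℝ) / 2)))) := by gcongr
    _ = _ := by ring

/-- **Truncated nearest-neighbour integral bound, valid also in the
supercritical regime.** There is `C > 0` (depending only on `d`) such that for
all `N ≥ 2`, `β > 0` and `δ ∈ (0, 1/2]`,
`∫_{B(0,1)^N} ∏_i (min_{j≠i} max(δ, |z_i−z_j|))^{−β²/2} dz
  ≤ C^N N^N (log(1/δ))^{N/2} δ^{−max(0,β²−d)N/2}`. -/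
theorem stmt_8 (d : ℕ) (hd : 1 ≤ d) :
    ∃ C : ℝ, 0 < C ∧ ∀ N : ℕ, 2 ≤ N → ∀ β : ℝ, 0 < β →
      ∀ δ : ℝ, 0 < δ → δ ≤ 1 / 2 →
      (∫⁻ z : Fin N → EuclideanSpace ℝ (Fin d) in
          Set.univ.pi (fun _ : Fin N => Metric.ball (0 : EuclideanSpace ℝ (Fin d)) 1),
        ENNReal.ofReal (∏ i : Fin N,
          (⨅ j : {j : Fin N // j ≠ i}, max δ (dist (z i) (z j.1))) ^ (-(β ^ 2) / 2)))
      ≤ ENNReal.ofReal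
          (C ^ N * (N : ℝ) ^ N * Real.log (1 / δ) ^ ((N : ℝ) / 2)
            * δ ^ (-(max 0 (β ^ 2 - (d : ℝ))) * (N : ℝ) / 2)) := by
  set μ : Measure (EuclideanSpace ℝ (Fin d)) := volume.restrict (ball 0 1)
  set A := kernelConst (volume : Measure (EuclideanSpace ℝ (Fin d)))
  have hdim : Module.finrank ℝ (EuclideanSpace ℝ (Fin d)) = d := finrank_euclideanSpace_fin
  have hA1 : 1 ≤ A := one_le_kernelConst _
  refine ⟨A ^ 2, by positivity, fun N hN β _ δ hδ hδ2 => ?_⟩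
  have : Nontrivial (Fin N) := Fin.nontrivial_iff_two_le.mpr hN
  set m := max 0 (β ^ 2 - d)
  set γ := min (β ^ 2) d
  have hγ : 0 ≤ γ := le_min (by positivity) d.cast_nonneg
  have hγd : γ ≤ Module.finrank ℝ (EuclideanSpace ℝ (Fin d)) := by rw [hdim]; exact min_le_right _ _
  have hexp : -(β ^ 2) / 2 = -(m / 2 + γ / 2) := by
    rcases le_total (β ^ 2) d with h | h <;> simp [m, γ, h] <;> ring
  have hAΛ : 1 ≤ A * Real.log (1 / δ) := one_le_kernelConst_mul_log _ hδ hδ2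
  have hL : 1 ≤ ENNReal.ofReal (A * Real.log (1 / δ)) := ENNReal.one_le_ofReal.mpr hAΛ
  have hV : μ Set.univ ≤ ENNReal.ofReal A := by
    simpa [μ] using measure_ball_le_kernelConst (volume : Measure (EuclideanSpace ℝ (Fin d)))
  have key := lintegral_prod_iInf_rpow_neg_le (μ := μ) (ι := Fin N) (a := m / 2) (b := γ / 2)
    hδ (by positivity) hL hV
    (fun w => setLIntegral_ball_truncKernel_le volume (by rwa [hdim]) hδ (by linarith) hγ hγd w)
    (fun w w' => (setLIntegral_ball_truncKernel_mul_le volume hδ hδ2 hγ hγd w w').trans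
      (le_mul_of_one_le_left zero_le (ENNReal.one_le_ofReal.mpr hA1)))
  rw [Fintype.card_fin] at key
  rw [volume_pi, Measure.restrict_pi_pi, hexp]
  refine key.trans ((ofReal_pow_mul_le (by positivity) hA1
    (by linarith [half_lt_log_one_div hδ hδ2]) hAΛ N).trans_eq ?_)
  rw [← Real.rpow_natCast (δ ^ (-(m / 2))) N, ← Real.rpow_mul hδ.le]
  ring_nf
end

section
/- Let d ≥ 1 and let k : ℝ^d → ℝ be continuous with k(x) = 0 for |x| > 1. Define K : ℝ^d → ℝ by K(u) = ∫_0^∞ k(e^s u) ds for u ≠ 0 and K(0) = 0. Then K is Lebesgue integrable on ℝ^d and its Fourier transform satisfies, for every ξ ∈ ℝ^d, (𝓕K)(ξ) = ∫_0^1 v^{d−1} (𝓕k)(vξ) dv, where 𝓕f(ξ) = ∫_{ℝ^d} f(u) e^{−2πi⟨u,ξ⟩} du. -/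
/-!
Since `∫ |k (e^s u)| du = e^{-ds} ‖k‖₁` is integrable over `s > 0` when `d ≥ 1`, the function
`(u, s) ↦ k (e^s u)` is integrable on `ℝ^d × (0, ∞)`; this gives the integrability of `K` and lets
us swap the Fourier integral with the `s`-integral. The Fourier transform of `u ↦ k (e^s u)` is
`e^{-ds} 𝓕k(e^{-s} ξ)`, and the substitution `v = e^{-s}` turns `∫_0^∞ e^{-ds} 𝓕k(e^{-s} ξ) ds`
into `∫_0^1 v^{d-1} 𝓕k(v ξ) dv`.
-/

open MeasureTheory Real Set Module
open scoped RealInnerProductSpace FourierTransform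

theorem image_exp_neg_Ioi_zero : (fun s : ℝ => exp (-s)) '' Ioi 0 = Ioo 0 1 := by
  rw [show (fun s : ℝ => exp (-s)) = exp ∘ Neg.neg from rfl, image_comp]
  simp [image_exp_Iio]

theorem integral_Ioi_exp_neg_pow_smul {E : Type*} [NormedAddCommGroup E] [NormedSpace ℝ E]
    (g : ℝ → E) (n : ℕ) :
    ∫ s in Ioi 0, exp (-s) ^ (n + 1) • g (exp (-s)) = ∫ v in (0 : ℝ)..1, v ^ n • g v := by
  have hderiv : ∀ s ∈ Ioi (0 : ℝ), HasDerivWithinAt (fun s => exp (-s)) (-exp (-s)) (Ioi 0) s :=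
    fun s _ => by simpa using ((hasDerivAt_neg s).exp).hasDerivWithinAt
  have hinj : InjOn (fun s : ℝ => exp (-s)) (Ioi 0) := fun a _ b _ h =>
    neg_injective (exp_injective h)
  rw [intervalIntegral.integral_of_le zero_le_one, integral_Ioc_eq_integral_Ioo,
    ← image_exp_neg_Ioi_zero,
    integral_image_eq_integral_abs_deriv_smul measurableSet_Ioi hderiv hinj]
  refine setIntegral_congr_fun measurableSet_Ioi fun s _ => ?_
  rw [abs_neg, abs_of_pos (exp_pos _), smul_smul, pow_succ']

section Dilation

variable {V : Type*} [NormedAddCommGroup V] [NormedSpace ℝ V] [FiniteDimensional ℝ V]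
  [MeasurableSpace V] [BorelSpace V] {μ : Measure V} [μ.IsAddHaarMeasure]
  {F : Type*} [NormedAddCommGroup F]

theorem integrable_prod_comp_exp_smul {k : V → F} (hk : Continuous k) (hki : Integrable k μ)
    (hV : 0 < finrank ℝ V) :
    Integrable (fun p : V × ℝ => k (exp p.2 • p.1)) (μ.prod (volume.restrict (Ioi 0))) := by
  have hcont : Continuous (fun p : V × ℝ => k (exp p.2 • p.1)) := by fun_prop
  rw [integrable_prod_iff' hcont.aestronglyMeasurable]
  refine ⟨.of_forall fun s => hki.comp_smul (exp_ne_zero s), ?_⟩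
  have hscale : ∀ s, ∫ u, ‖k (exp s • u)‖ ∂μ = exp (-finrank ℝ V * s) * ∫ u, ‖k u‖ ∂μ := by
    intro s
    rw [Measure.integral_comp_smul_of_nonneg μ (fun u => ‖k u‖) _ (hR := (exp_pos s).le),
      smul_eq_mul, ← exp_nat_mul, ← exp_neg, neg_mul]
  simp_rw [hscale]
  exact (exp_neg_integrableOn_Ioi 0 (by exact_mod_cast hV)).mul_const _

end Dilation

section Fourier

variable {V : Type*} [NormedAddCommGroup V] [InnerProductSpace ℝ V] [FiniteDimensional ℝ V]
  [MeasurableSpace V] [BorelSpace V] {E : Type*} [NormedAddCommGroup E] [NormedSpace ℂ E]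

theorem Real.fourier_comp_smul (f : V → E) {a : ℝ} (ha : 0 < a) (w : V) :
    𝓕 (fun x => f (a • x)) w = (a ^ finrank ℝ V)⁻¹ • 𝓕 f (a⁻¹ • w) := by
  have hinner : ∀ x, ⟪x, w⟫ = ⟪a • x, a⁻¹ • w⟫ := fun x => by
    rw [real_inner_smul_left, real_inner_smul_right, mul_inv_cancel_left₀ ha.ne']
  simp_rw [Real.fourier_eq, hinner]
  rw [Measure.integral_comp_smul_of_nonneg volume (fun x => 𝐞 (-⟪x, a⁻¹ • w⟫) • f x) a
    (hR := ha.le)]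

theorem Real.fourier_integral_eq_integral_fourier [CompleteSpace E] {X : Type*} [MeasurableSpace X]
    {ν : Measure X} [SFinite ν] {G : V → X → E}
    (hG : Integrable (Function.uncurry G) (volume.prod ν)) (w : V) :
    𝓕 (fun u => ∫ s, G u s ∂ν) w = ∫ s, 𝓕 (fun u => G u s) w ∂ν := by
  have hchar : Measurable fun p : V × X => (𝐞 (-⟪p.1, w⟫) : ℂ) :=
    (by fun_prop : Continuous fun u : V => (𝐞 (-⟪u, w⟫) : ℂ)).measurable.comp measurable_fst
  have hint : Integrable (Function.uncurry fun u s => (𝐞 (-⟪u, w⟫) : ℂ) • G u s)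
      (volume.prod ν) :=
    hG.bdd_smul 1 hchar.aestronglyMeasurable (.of_forall fun p => (Circle.norm_coe _).le)
  simp_rw [Real.fourier_eq, Circle.smul_def, ← integral_smul]
  exact integral_integral_swap hint

end Fourier

theorem stmt_9_general (d : ℕ) (hd : 1 ≤ d) (k : EuclideanSpace ℝ (Fin d) → ℝ)
    (hk : Continuous k) (hksupp : ∀ x : EuclideanSpace ℝ (Fin d), 1 < ‖x‖ → k x = 0)
    (K : EuclideanSpace ℝ (Fin d) → ℝ)
    (hK : ∀ u : EuclideanSpace ℝ (Fin d), u ≠ 0 →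
      K u = ∫ s in Set.Ioi (0 : ℝ), k (Real.exp s • u)) :
    Integrable K ∧
    ∀ ξ : EuclideanSpace ℝ (Fin d),
      FourierTransform.fourier (fun u => (K u : ℂ)) ξ
        = ∫ v in (0 : ℝ)..1,
            ((v : ℂ) ^ (d - 1)) * FourierTransform.fourier (fun x => (k x : ℂ)) (v • ξ) := by
  obtain ⟨n, rfl⟩ : ∃ n, d = n + 1 := ⟨d - 1, by omega⟩
  have hki : Integrable k := hk.integrable_of_hasCompactSupport <|
    HasCompactSupport.intro (isCompact_closedBall 0 1) fun x hx => hksupp x (by simpa using hx)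
  have hG := integrable_prod_comp_exp_smul hk hki (by simp)
  have hKae : K =ᵐ[volume] fun u => ∫ s in Ioi (0 : ℝ), k (exp s • u) := by
    filter_upwards [compl_mem_ae_iff.2 (measure_singleton (0 : EuclideanSpace ℝ (Fin (n + 1))))]
      with u hu
    exact hK u hu
  refine ⟨hG.integral_prod_left.congr hKae.symm, fun ξ => ?_⟩
  calc 𝓕 (fun u => (K u : ℂ)) ξ
      = 𝓕 (fun u => ∫ s in Ioi (0 : ℝ), (k (exp s • u) : ℂ)) ξ :=
        Real.fourier_congr_ae (hKae.mono fun u hu => by rw [hu]; exact integral_ofReal.symm) ξ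
    _ = ∫ s in Ioi (0 : ℝ), exp (-s) ^ (n + 1) • 𝓕 (fun x => (k x : ℂ)) (exp (-s) • ξ) := by
        rw [Real.fourier_integral_eq_integral_fourier hG.ofReal]
        refine setIntegral_congr_fun measurableSet_Ioi fun s _ => ?_
        rw [Real.fourier_comp_smul (fun x => (k x : ℂ)) (exp_pos s)]
        simp [exp_neg]
    _ = ∫ v in (0 : ℝ)..1, v ^ n • 𝓕 (fun x => (k x : ℂ)) (v • ξ) :=
        integral_Ioi_exp_neg_pow_smul (fun v => 𝓕 (fun x => (k x : ℂ)) (v • ξ)) n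
    _ = _ := by simp [Complex.real_smul]

/-- **Fourier transform of the ⋆-scale invariant covariance kernel.**
If `k : ℝ^d → ℝ` is continuous and vanishes for `|x| > 1`, and
`K(u) = ∫_0^∞ k(e^s u) ds` for `u ≠ 0`, `K(0) = 0`, then `K` is integrable and
`𝓕K(ξ) = ∫_0^1 v^{d−1} 𝓕k(vξ) dv` (with the convention
`𝓕f(ξ) = ∫ f(u) e^{−2πi⟨u,ξ⟩} du`). -/
theorem stmt_9 (d : ℕ) (hd : 1 ≤ d) (k : EuclideanSpace ℝ (Fin d) → ℝ)
    (hk : Continuous k) (hksupp : ∀ x : EuclideanSpace ℝ (Fin d), 1 < ‖x‖ → k x = 0)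
    (K : EuclideanSpace ℝ (Fin d) → ℝ) (hK0 : K 0 = 0)
    (hK : ∀ u : EuclideanSpace ℝ (Fin d), u ≠ 0 →
      K u = ∫ s in Set.Ioi (0 : ℝ), k (Real.exp s • u)) :
    Integrable K ∧
    ∀ ξ : EuclideanSpace ℝ (Fin d),
      FourierTransform.fourier (fun u => (K u : ℂ)) ξ
        = ∫ v in (0 : ℝ)..1,
            ((v : ℂ) ^ (d - 1)) * FourierTransform.fourier (fun x => (k x : ℂ)) (v • ξ) :=
  stmt_9_general d hd k hk hksupp K hK
end

section
/- Let d ≥ 1 and let h : ℝ^d → ℝ be continuous with h ≥ 0, h(0) > 0, and h(ξ) ≤ C₀ (1 + |ξ|²)^{−s} for all ξ ∈ ℝ^d, for some constants C₀ > 0 and s > (d+1)/2. Then there exist constants c, C > 0 such that for every ξ ∈ ℝ^d, c (1 + |ξ|²)^{−d/2} ≤ ∫_0^1 v^{d−1} h(vξ) dv ≤ C (1 + |ξ|²)^{−d/2}. -/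
/-!
Both bounds are proved against `(1 + |ξ|)^(-d)`, which lies within a factor `2^(d/2)` of
`(1 + |ξ|²)^(-d/2)`. Lower bound: `h ≥ h 0 / 2` on a ball of radius `δ`, so already the part
`v ≤ min 1 δ / (1 + |ξ|)` of the integral is `≳ (1 + |ξ|)^(-d)`. Upper bound: since
`v (1 + |ξ|) ≤ 1 + v |ξ|` and `2s ≥ d + 1`, the integrand is at most
`C₀ 2^s (1 + |ξ|)^(1-d) (1 + v |ξ|)^(-2)`, and `∫₀¹ (1 + v t)^(-2) dv = 1 / (1 + t)`.
-/

open Real intervalIntegral MeasureTheory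

theorem one_div_one_add_pow_le_one_add_sq_rpow {t : ℝ} (ht : 0 ≤ t) (d : ℕ) :
    1 / (1 + t) ^ d ≤ (1 + t ^ 2) ^ (-(d : ℝ) / 2) := by
  have hsqrt : √(1 + t ^ 2) ≤ 1 + t := (sqrt_le_left (by positivity)).2 (by nlinarith)
  rw [show -(d : ℝ) / 2 = -((1 / 2) * d) by ring, rpow_neg (by positivity), rpow_mul
    (by positivity), ← sqrt_eq_rpow, rpow_natCast, one_div]
  gcongr

theorem one_add_sq_rpow_le_sqrt_two_pow_div {t : ℝ} (ht : 0 ≤ t) (d : ℕ) :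
    (1 + t ^ 2) ^ (-(d : ℝ) / 2) ≤ √2 ^ d / (1 + t) ^ d := by
  have hsqrt : 1 + t ≤ √2 * √(1 + t ^ 2) := by
    rw [← sqrt_mul zero_le_two, le_sqrt (by positivity) (by positivity)]
    nlinarith [sq_nonneg (1 - t)]
  rw [show -(d : ℝ) / 2 = -((1 / 2) * d) by ring, rpow_neg (by positivity), rpow_mul
    (by positivity), ← sqrt_eq_rpow, rpow_natCast, ← div_pow, ← inv_pow]
  gcongr
  rw [inv_eq_one_div, div_le_div_iff₀ (by positivity) (by positivity)]
  linarith

theorem intervalIntegrable_inv_one_add_mul_sq {t b : ℝ} (ht : 0 ≤ t) (hb : 0 ≤ b) :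
    IntervalIntegrable (fun v => ((1 + t * v) ^ 2)⁻¹) volume 0 b := by
  refine ContinuousOn.intervalIntegrable (ContinuousOn.inv₀ (by fun_prop) fun v hv => ?_)
  rw [Set.uIcc_of_le hb] at hv
  have : 0 < 1 + t * v := by nlinarith [hv.1]
  positivity

theorem integral_inv_one_add_mul_sq {t b : ℝ} (ht : 0 ≤ t) (hb : 0 ≤ b) :
    ∫ v in (0 : ℝ)..b, ((1 + t * v) ^ 2)⁻¹ = b / (1 + t * b) := by
  have hpos : ∀ v ∈ Set.uIcc 0 b, 0 < 1 + t * v := fun v hv => by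
    rw [Set.uIcc_of_le hb] at hv; nlinarith [hv.1]
  have hderiv : ∀ v ∈ Set.uIcc 0 b,
      HasDerivAt (fun v => v / (1 + t * v)) ((1 + t * v) ^ 2)⁻¹ v := fun v hv => by
    refine ((hasDerivAt_id' v).div (((hasDerivAt_id' v).const_mul t).const_add 1)
      (hpos v hv).ne').congr_deriv ?_
    field_simp
    ring
  rw [integral_eq_sub_of_hasDerivAt hderiv (intervalIntegrable_inv_one_add_mul_sq ht hb),
    zero_div, sub_zero]

theorem one_add_sq_rpow_neg_le_div_pow {x s : ℝ} (hx : 0 ≤ x) {k : ℕ} (hk : (k : ℝ) ≤ 2 * s) :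
    (1 + x ^ 2) ^ (-s) ≤ 2 ^ s / (1 + x) ^ k := by
  have hs : 0 ≤ s := by linarith [k.cast_nonneg (α := ℝ)]
  have hpow : (1 + x) ^ k ≤ (2 * (1 + x ^ 2)) ^ s :=
    calc (1 + x) ^ k = ((1 + x) ^ 2) ^ ((k : ℝ) / 2) := by
          rw [← rpow_natCast (1 + x) 2, ← rpow_mul (by positivity), ← rpow_natCast]
          congr 1; push_cast; ring
      _ ≤ ((1 + x) ^ 2) ^ s :=
          rpow_le_rpow_of_exponent_le (one_le_pow₀ (by linarith)) (by linarith)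
      _ ≤ (2 * (1 + x ^ 2)) ^ s := by gcongr; nlinarith [sq_nonneg (1 - x)]
  rw [rpow_neg (by positivity), ← one_div, div_le_div_iff₀ (by positivity) (by positivity),
    one_mul, ← mul_rpow zero_le_two (by positivity)]
  exact hpow

theorem pow_mul_one_add_sq_rpow_neg_le {v t s : ℝ} (hv₀ : 0 ≤ v) (hv₁ : v ≤ 1) (ht : 0 ≤ t)
    {n : ℕ} (hs : (n : ℝ) + 2 ≤ 2 * s) :
    v ^ n * (1 + (v * t) ^ 2) ^ (-s) ≤ 2 ^ s / (1 + t) ^ n * ((1 + t * v) ^ 2)⁻¹ := by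
  have htv : 0 < 1 + t * v := by positivity
  have hdecay : (1 + (v * t) ^ 2) ^ (-s) ≤ 2 ^ s / (1 + t * v) ^ (n + 2) := by
    rw [mul_comm v t]
    exact one_add_sq_rpow_neg_le_div_pow (by positivity) (by push_cast; linarith)
  calc v ^ n * (1 + (v * t) ^ 2) ^ (-s) ≤ v ^ n * (2 ^ s / (1 + t * v) ^ (n + 2)) := by gcongr
    _ = 2 ^ s * (v / (1 + t * v)) ^ n * ((1 + t * v) ^ 2)⁻¹ := by
        rw [div_pow, pow_add]; field_simp
    _ ≤ 2 ^ s * (1 / (1 + t)) ^ n * ((1 + t * v) ^ 2)⁻¹ := by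
        gcongr 2 ^ s * ?_ ^ n * _
        rw [div_le_div_iff₀ htv (by positivity)]
        nlinarith
    _ = 2 ^ s / (1 + t) ^ n * ((1 + t * v) ^ 2)⁻¹ := by rw [one_div_pow]; ring

section NormedSpace

variable {E : Type*} [NormedAddCommGroup E] [NormedSpace ℝ E]

theorem exists_pos_div_le_integral_pow_mul_smul {h : E → ℝ} (hcont : Continuous h)
    (hnn : ∀ x, 0 ≤ h x) (h0 : 0 < h 0) (n : ℕ) :
    ∃ c > 0, ∀ ξ : E, c / (1 + ‖ξ‖) ^ (n + 1) ≤ ∫ v in (0 : ℝ)..1, v ^ n * h (v • ξ) := by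
  obtain ⟨δ, hδ, hball⟩ : ∃ δ > 0, ∀ η : E, ‖η‖ ≤ δ → h 0 / 2 ≤ h η := by
    obtain ⟨δ, hδ, H⟩ := Metric.nhds_basis_closedBall.eventually_iff.1
      (hcont.continuousAt.eventually (lt_mem_nhds (half_lt_self h0)))
    exact ⟨δ, hδ, fun η hη => (H (mem_closedBall_zero_iff.2 hη)).le⟩
  set ρ := min 1 δ
  refine ⟨h 0 / 2 * ρ ^ (n + 1) / (n + 1), by positivity, fun ξ => ?_⟩
  set t := ‖ξ‖
  have ht : 0 ≤ t := norm_nonneg ξ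
  set r := ρ / (1 + t)
  have hr₀ : 0 ≤ r := by positivity
  have hr₁ : r ≤ 1 := div_le_one_of_le₀ ((min_le_left 1 δ).trans (by linarith)) (by positivity)
  have hfi : ∀ a b, IntervalIntegrable (fun v => v ^ n * h (v • ξ)) volume a b :=
    fun a b => (by fun_prop : Continuous fun v : ℝ => v ^ n * h (v • ξ)).intervalIntegrable a b
  calc h 0 / 2 * ρ ^ (n + 1) / (n + 1) / (1 + t) ^ (n + 1)
        = ∫ v in (0 : ℝ)..r, h 0 / 2 * v ^ n := by
        rw [intervalIntegral.integral_const_mul, integral_pow, div_pow]; field_simp; ring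
    _ ≤ ∫ v in (0 : ℝ)..r, v ^ n * h (v • ξ) := by
        refine integral_mono_on hr₀ (Continuous.intervalIntegrable (by fun_prop) _ _) (hfi 0 r)
          fun v hv => ?_
        rw [mul_comm]
        gcongr
        · exact pow_nonneg hv.1 n
        apply hball
        rw [norm_smul, norm_of_nonneg hv.1]
        have : v * (1 + t) ≤ ρ := (le_div_iff₀ (by positivity)).1 hv.2
        linarith [min_le_right 1 δ, hv.1, mul_one_add v t]
    _ ≤ ∫ v in (0 : ℝ)..1, v ^ n * h (v • ξ) := by
        refine integral_mono_interval le_rfl hr₀ hr₁ ?_ (hfi 0 1)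
        refine ae_restrict_of_forall_mem measurableSet_Ioc fun v hv => ?_
        exact mul_nonneg (pow_nonneg hv.1.le n) (hnn _)

theorem integral_pow_mul_smul_le {h : E → ℝ} (hcont : Continuous h) {C₀ s : ℝ} (hC₀ : 0 ≤ C₀)
    {n : ℕ} (hs : (n : ℝ) + 2 ≤ 2 * s) (hdecay : ∀ ξ, h ξ ≤ C₀ * (1 + ‖ξ‖ ^ 2) ^ (-s)) (ξ : E) :
    ∫ v in (0 : ℝ)..1, v ^ n * h (v • ξ) ≤ C₀ * 2 ^ s / (1 + ‖ξ‖) ^ (n + 1) := by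
  set t := ‖ξ‖
  have ht : 0 ≤ t := norm_nonneg ξ
  calc ∫ v in (0 : ℝ)..1, v ^ n * h (v • ξ)
      ≤ ∫ v in (0 : ℝ)..1, C₀ * (2 ^ s / (1 + t) ^ n) * ((1 + t * v) ^ 2)⁻¹ := by
        refine integral_mono_on zero_le_one (Continuous.intervalIntegrable (by fun_prop) _ _)
          ((intervalIntegrable_inv_one_add_mul_sq ht zero_le_one).const_mul _) fun v hv => ?_
        calc v ^ n * h (v • ξ) ≤ v ^ n * (C₀ * (1 + (v * t) ^ 2) ^ (-s)) := by
              gcongr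
              · exact pow_nonneg hv.1 n
              · have := hdecay (v • ξ)
                rwa [norm_smul, norm_of_nonneg hv.1] at this
          _ = C₀ * (v ^ n * (1 + (v * t) ^ 2) ^ (-s)) := by ring
          _ ≤ C₀ * (2 ^ s / (1 + t) ^ n * ((1 + t * v) ^ 2)⁻¹) :=
              mul_le_mul_of_nonneg_left (pow_mul_one_add_sq_rpow_neg_le hv.1 hv.2 ht hs) hC₀
          _ = _ := by ring
    _ = C₀ * 2 ^ s / (1 + t) ^ (n + 1) := by
        rw [intervalIntegral.integral_const_mul, integral_inv_one_add_mul_sq ht zero_le_one]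
        field_simp
        ring

end NormedSpace

/-- **Two-sided bound on the ⋆-scale invariant Fourier symbol.**
If `h : ℝ^d → ℝ` is continuous, nonnegative, `h(0) > 0` and
`h(ξ) ≤ C₀ (1+|ξ|²)^{−s}` with `s > (d+1)/2`, then there are `c, C > 0` with
`c (1+|ξ|²)^{−d/2} ≤ ∫_0^1 v^{d−1} h(vξ) dv ≤ C (1+|ξ|²)^{−d/2}` for all `ξ`. -/
theorem stmt_10 (d : ℕ) (hd : 1 ≤ d) (h : EuclideanSpace ℝ (Fin d) → ℝ)
    (hcont : Continuous h) (hnn : ∀ ξ, 0 ≤ h ξ) (h0 : 0 < h 0)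
    (C₀ s : ℝ) (hC₀ : 0 < C₀) (hs : ((d : ℝ) + 1) / 2 < s)
    (hdecay : ∀ ξ : EuclideanSpace ℝ (Fin d), h ξ ≤ C₀ * (1 + ‖ξ‖ ^ 2) ^ (-s)) :
    ∃ c C : ℝ, 0 < c ∧ 0 < C ∧ ∀ ξ : EuclideanSpace ℝ (Fin d),
      c * (1 + ‖ξ‖ ^ 2) ^ (-(d : ℝ) / 2)
          ≤ (∫ v in (0 : ℝ)..1, v ^ (d - 1) * h (v • ξ)) ∧
      (∫ v in (0 : ℝ)..1, v ^ (d - 1) * h (v • ξ))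
          ≤ C * (1 + ‖ξ‖ ^ 2) ^ (-(d : ℝ) / 2) := by
  obtain ⟨n, rfl⟩ : ∃ n, d = n + 1 := ⟨d - 1, by omega⟩
  obtain ⟨c, hc, hlower⟩ := exists_pos_div_le_integral_pow_mul_smul hcont hnn h0 n
  have hupper := integral_pow_mul_smul_le hcont hC₀.le (n := n)
    (by push_cast at hs; linarith) hdecay
  refine ⟨c / √2 ^ (n + 1), C₀ * 2 ^ s, by positivity, by positivity, fun ξ => ⟨?_, ?_⟩⟩
  · calc c / √2 ^ (n + 1) * (1 + ‖ξ‖ ^ 2) ^ (-((n + 1 : ℕ) : ℝ) / 2)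
        ≤ c / √2 ^ (n + 1) * (√2 ^ (n + 1) / (1 + ‖ξ‖) ^ (n + 1)) := by
          gcongr
          exact one_add_sq_rpow_le_sqrt_two_pow_div (norm_nonneg ξ) _
      _ = c / (1 + ‖ξ‖) ^ (n + 1) := by field_simp
      _ ≤ _ := by rw [Nat.add_sub_cancel]; exact hlower ξ
  · calc ∫ v in (0 : ℝ)..1, v ^ (n + 1 - 1) * h (v • ξ)
        ≤ C₀ * 2 ^ s / (1 + ‖ξ‖) ^ (n + 1) := by rw [Nat.add_sub_cancel]; exact hupper ξ
      _ = C₀ * 2 ^ s * (1 / (1 + ‖ξ‖) ^ (n + 1)) := by ring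
      _ ≤ C₀ * 2 ^ s * (1 + ‖ξ‖ ^ 2) ^ (-((n + 1 : ℕ) : ℝ) / 2) := by
          gcongr
          exact one_div_one_add_pow_le_one_add_sq_rpow (norm_nonneg ξ) _
end

section
/- Let d ≥ 1 and let h : ℝ^d → ℝ be continuously differentiable with ‖∇h(ξ)‖ ≤ C₀ (1 + |ξ|²)^{−s} for all ξ ∈ ℝ^d, for some constants C₀ > 0 and s > (d+1)/2. Then there exists a constant C > 0 such that for every ξ ∈ ℝ^d, ‖∫_0^1 v^d ∇h(vξ) dv‖ ≤ C (1 + |ξ|²)^{−(d+1)/2}. -/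
/-!
Pointwise, `‖v^d ∇h(vξ)‖ ≤ C₀ v^d (1 + v²|ξ|²)^(-s)`, so it suffices to bound the scalar integral
`∫₀¹ v^d (1 + v² x)^(-s) dv` with `x = |ξ|²`. Split it at `a = (1 + x)^(-1/2)`. Below `a` the
integrand is at most `v^d`, giving `a^(d+1)/(d+1)`. Above `a`, `1 + v² x ≥ v² (1 + x)`, so the
integrand is at most `(1 + x)^(-s) v^(d-2s)`; since `d - 2s < -1` its integral over `[a, 1]` is at
most `(1 + x)^(-s) a^(d+1-2s)/(2s-d-1)`. Both pieces equal a constant times `(1 + x)^(-(d+1)/2)`.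
-/

open intervalIntegral

lemma integral_rpow_le_of_lt_neg_one {a r : ℝ} (ha : 0 < a) (ha1 : a ≤ 1) (hr : r < -1) :
    ∫ v in a..1, v ^ r ≤ a ^ (r + 1) / -(r + 1) := by
  have h0 : (0 : ℝ) ∉ Set.uIcc a 1 := by
    rw [Set.uIcc_of_le ha1]; exact fun h => ha.not_ge h.1
  rw [integral_rpow (Or.inr ⟨hr.ne, h0⟩), Real.one_rpow, ← neg_div_neg_eq, neg_sub]
  gcongr <;> linarith

section Profile

variable {d : ℕ} {x s : ℝ}

lemma continuous_pow_mul_one_add_sq_mul_rpow (hx : 0 ≤ x) :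
    Continuous fun v : ℝ => v ^ d * (1 + v ^ 2 * x) ^ (-s) :=
  (continuous_pow d).mul <| (by fun_prop : Continuous fun v : ℝ => 1 + v ^ 2 * x).rpow_const
    fun v => Or.inl (by positivity)

lemma integral_pow_mul_one_add_sq_mul_rpow_le_of_le_cutoff {a : ℝ} (ha : 0 ≤ a) (hx : 0 ≤ x)
    (hs : 0 ≤ s) :
    ∫ v in (0 : ℝ)..a, v ^ d * (1 + v ^ 2 * x) ^ (-s) ≤ a ^ (d + 1) / (d + 1) := by
  calc ∫ v in (0 : ℝ)..a, v ^ d * (1 + v ^ 2 * x) ^ (-s)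
      ≤ ∫ v in (0 : ℝ)..a, v ^ d := by
        refine integral_mono_on ha
          ((continuous_pow_mul_one_add_sq_mul_rpow hx).intervalIntegrable _ _)
          ((continuous_pow d).intervalIntegrable _ _) fun v hv => ?_
        have hv0 := hv.1
        refine mul_le_of_le_one_right (by positivity) ?_
        exact Real.rpow_le_one_of_one_le_of_nonpos (by nlinarith [sq_nonneg v]) (by linarith)
    _ = a ^ (d + 1) / (d + 1) := by simp [integral_pow]

lemma integral_pow_mul_one_add_sq_mul_rpow_le_of_cutoff_le {a : ℝ} (ha : 0 < a) (ha1 : a ≤ 1)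
    (hx : 0 ≤ x) (hs : ((d : ℝ) + 1) / 2 < s) :
    ∫ v in a..1, v ^ d * (1 + v ^ 2 * x) ^ (-s)
      ≤ (1 + x) ^ (-s) * (a ^ ((d : ℝ) - 2 * s + 1) / (2 * s - d - 1)) := by
  have hpos : ∀ v ∈ Set.Icc a 1, 0 < v := fun v hv => ha.trans_le hv.1
  have hs0 : 0 ≤ s := by linarith [d.cast_nonneg (α := ℝ)]
  calc ∫ v in a..1, v ^ d * (1 + v ^ 2 * x) ^ (-s)
      ≤ ∫ v in a..1, (1 + x) ^ (-s) * v ^ ((d : ℝ) - 2 * s) := by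
        refine integral_mono_on ha1
          ((continuous_pow_mul_one_add_sq_mul_rpow hx).intervalIntegrable _ _) ?_ fun v hv => ?_
        · refine (continuousOn_const.mul
            (continuousOn_id.rpow_const fun v hv => ?_)).intervalIntegrable
          rw [Set.uIcc_of_le ha1] at hv
          exact Or.inl (hpos v hv).ne'
        have hv0 := hpos v hv
        have hsq : v ^ 2 * (1 + x) ≤ 1 + v ^ 2 * x := by nlinarith [hv.2]
        calc v ^ d * (1 + v ^ 2 * x) ^ (-s) ≤ v ^ d * (v ^ 2 * (1 + x)) ^ (-s) := by
              refine mul_le_mul_of_nonneg_left ?_ (by positivity)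
              exact Real.rpow_le_rpow_of_nonpos (by positivity) hsq (by linarith)
          _ = (1 + x) ^ (-s) * v ^ ((d : ℝ) - 2 * s) := by
              rw [Real.mul_rpow (by positivity) (by positivity), ← Real.rpow_natCast v 2,
                ← Real.rpow_mul hv0.le, ← Real.rpow_natCast v d, mul_left_comm, ← mul_assoc,
                ← Real.rpow_add hv0, mul_comm]
              push_cast; ring_nf
    _ ≤ (1 + x) ^ (-s) * (a ^ ((d : ℝ) - 2 * s + 1) / (2 * s - d - 1)) := by
        rw [integral_const_mul]
        gcongr
        refine (integral_rpow_le_of_lt_neg_one ha ha1 (by linarith)).trans_eq ?_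
        congr 1; ring

lemma integral_pow_mul_one_add_sq_mul_rpow_le (hx : 0 ≤ x) (hs : ((d : ℝ) + 1) / 2 < s) :
    ∫ v in (0 : ℝ)..1, v ^ d * (1 + v ^ 2 * x) ^ (-s)
      ≤ (1 / ((d : ℝ) + 1) + 1 / (2 * s - d - 1)) * (1 + x) ^ (-((d : ℝ) + 1) / 2) := by
  set A := 1 + x
  have hA : 0 < A := by positivity
  set a := A ^ (-(1 / 2) : ℝ)
  have ha : 0 < a := Real.rpow_pos_of_pos hA _
  have ha1 : a ≤ 1 := Real.rpow_le_one_of_one_le_of_nonpos (by linarith) (by norm_num)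
  have hint := (continuous_pow_mul_one_add_sq_mul_rpow (d := d) (s := s) hx).intervalIntegrable
    (μ := MeasureTheory.volume)
  rw [← integral_add_adjacent_intervals (hint 0 a) (hint a 1)]
  have h₁ : a ^ (d + 1) = A ^ (-((d : ℝ) + 1) / 2) := by
    rw [← Real.rpow_natCast, ← Real.rpow_mul hA.le]; push_cast; ring_nf
  have h₂ : A ^ (-s) * a ^ ((d : ℝ) - 2 * s + 1) = A ^ (-((d : ℝ) + 1) / 2) := by
    rw [← Real.rpow_mul hA.le, ← Real.rpow_add hA]; ring_nf
  calc _ ≤ a ^ (d + 1) / (d + 1) + A ^ (-s) * (a ^ ((d : ℝ) - 2 * s + 1) / (2 * s - d - 1)) :=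
        add_le_add
          (integral_pow_mul_one_add_sq_mul_rpow_le_of_le_cutoff ha.le hx
            (by linarith [d.cast_nonneg (α := ℝ)]))
          (integral_pow_mul_one_add_sq_mul_rpow_le_of_cutoff_le ha ha1 hx hs)
    _ = _ := by rw [h₁, ← mul_div_assoc, h₂]; ring

end Profile

lemma norm_pow_smul_comp_smul_le {E F : Type*} [NormedAddCommGroup E] [NormedSpace ℝ E]
    [NormedAddCommGroup F] [NormedSpace ℝ F] {f : E → F} {C₀ s : ℝ}
    (hf : ∀ y, ‖f y‖ ≤ C₀ * (1 + ‖y‖ ^ 2) ^ (-s)) (d : ℕ) (ξ : E) {v : ℝ} (hv : 0 ≤ v) :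
    ‖v ^ d • f (v • ξ)‖ ≤ C₀ * (v ^ d * (1 + v ^ 2 * ‖ξ‖ ^ 2) ^ (-s)) := by
  have := hf (v • ξ)
  rw [norm_smul, mul_pow, Real.norm_eq_abs, sq_abs] at this
  rw [norm_smul, norm_pow, Real.norm_of_nonneg hv, mul_left_comm]
  exact mul_le_mul_of_nonneg_left this (by positivity)

theorem stmt_11_general (d : ℕ) (h : EuclideanSpace ℝ (Fin d) → ℝ)
    (C₀ s : ℝ) (hC₀ : 0 < C₀) (hs : ((d : ℝ) + 1) / 2 < s)
    (hdecay : ∀ ξ : EuclideanSpace ℝ (Fin d),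
      ‖gradient h ξ‖ ≤ C₀ * (1 + ‖ξ‖ ^ 2) ^ (-s)) :
    ∃ C : ℝ, 0 < C ∧ ∀ ξ : EuclideanSpace ℝ (Fin d),
      ‖∫ v in (0 : ℝ)..1, v ^ d • gradient h (v • ξ)‖
        ≤ C * (1 + ‖ξ‖ ^ 2) ^ (-((d : ℝ) + 1) / 2) := by
  have hs' : 0 < 2 * s - d - 1 := by linarith
  refine ⟨C₀ * (1 / ((d : ℝ) + 1) + 1 / (2 * s - d - 1)), by positivity, fun ξ => ?_⟩
  have hprofile := continuous_pow_mul_one_add_sq_mul_rpow (d := d) (s := s) (sq_nonneg ‖ξ‖)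
  calc ‖∫ v in (0 : ℝ)..1, v ^ d • gradient h (v • ξ)‖
      ≤ ∫ v in (0 : ℝ)..1, C₀ * (v ^ d * (1 + v ^ 2 * ‖ξ‖ ^ 2) ^ (-s)) :=
        norm_integral_le_of_norm_le zero_le_one
          (MeasureTheory.ae_of_all _ fun v hv => norm_pow_smul_comp_smul_le hdecay d ξ hv.1.le)
          ((hprofile.const_mul C₀).intervalIntegrable _ _)
    _ = C₀ * ∫ v in (0 : ℝ)..1, v ^ d * (1 + v ^ 2 * ‖ξ‖ ^ 2) ^ (-s) := integral_const_mul _ _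
    _ ≤ C₀ * ((1 / ((d : ℝ) + 1) + 1 / (2 * s - d - 1))
          * (1 + ‖ξ‖ ^ 2) ^ (-((d : ℝ) + 1) / 2)) := by
        gcongr
        exact integral_pow_mul_one_add_sq_mul_rpow_le (sq_nonneg _) hs
    _ = _ := (mul_assoc _ _ _).symm

/-- **Gradient bound for the ⋆-scale invariant Fourier symbol.**
If `h : ℝ^d → ℝ` is `C¹` with `‖∇h(ξ)‖ ≤ C₀ (1+|ξ|²)^{−s}`, `s > (d+1)/2`,
then there is `C > 0` with
`‖∫_0^1 v^d ∇h(vξ) dv‖ ≤ C (1+|ξ|²)^{−(d+1)/2}` for all `ξ`. -/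
theorem stmt_11 (d : ℕ) (hd : 1 ≤ d) (h : EuclideanSpace ℝ (Fin d) → ℝ)
    (hsmooth : ContDiff ℝ 1 h)
    (C₀ s : ℝ) (hC₀ : 0 < C₀) (hs : ((d : ℝ) + 1) / 2 < s)
    (hdecay : ∀ ξ : EuclideanSpace ℝ (Fin d),
      ‖gradient h ξ‖ ≤ C₀ * (1 + ‖ξ‖ ^ 2) ^ (-s)) :
    ∃ C : ℝ, 0 < C ∧ ∀ ξ : EuclideanSpace ℝ (Fin d),
      ‖∫ v in (0 : ℝ)..1, v ^ d • gradient h (v • ξ)‖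
        ≤ C * (1 + ‖ξ‖ ^ 2) ^ (-((d : ℝ) + 1) / 2) :=
  stmt_11_general d h C₀ s hC₀ hs hdecay
end

section
/- Let d ≥ 1 and let h : ℝ^d → ℝ be continuous with h ≥ 0, h(0) > 0, and h(ξ) ≤ C₀ (1 + |ξ|²)^{−s} for all ξ ∈ ℝ^d, for some constants C₀ > 0 and s > (d+1)/2. Then there exist constants c, C > 0 such that for every α ∈ (0, 1] and every ξ ∈ ℝ^d, c (1 + |ξ|²)^{−(d+α)/2} ≤ ∫_0^1 v^{d−1+α} h(vξ) dv ≤ C (1 + |ξ|²)^{−(d+α)/2}. -/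
/-!
Write `T = (1 + ‖ξ‖²)^(-1/2)`, so that `T ‖ξ‖ ≤ 1` and `T^(p+1) = (1 + ‖ξ‖²)^(-(p+1)/2)`
for `p = d - 1 + α`. Near the origin `h ≥ h 0 / 2` on a ball of radius `η`, so the piece of the
integral over `[0, η T]` already gives the lower bound. For the upper bound, `h ≤ C₀` on `[0, T]`,
while on `[T, 1]` the decay gives `h (v ξ) ≤ C₀ v^(-2s) (1 + ‖ξ‖²)^(-s)`, whose integral against
`v^p` is of order `T^(p + 1 - 2s) (1 + ‖ξ‖²)^(-s) = T^(p+1)` because `p + 1 ≤ d + 1 < 2 s`,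
uniformly in `α ∈ (0, 1]`.
-/

open Set intervalIntegral

section

variable {E : Type*} [SeminormedAddCommGroup E]

lemma exists_forall_norm_le_le_of_continuousAt {h : E → ℝ} (hc : ContinuousAt h 0) {m : ℝ}
    (hm : m < h 0) : ∃ η, 0 < η ∧ η ≤ 1 ∧ ∀ x, ‖x‖ ≤ η → m ≤ h x := by
  obtain ⟨ε, hε, hball⟩ := Metric.eventually_nhds_iff.1 (hc.eventually (lt_mem_nhds hm))
  refine ⟨min (ε / 2) 1, by positivity, min_le_right _ _, fun x hx => (hball ?_).le⟩
  rw [dist_zero_right]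
  linarith [min_le_left (ε / 2) 1]

lemma one_add_norm_sq_rpow_neg_half_rpow (ξ : E) (q : ℝ) :
    ((1 + ‖ξ‖ ^ 2) ^ (-(1 / 2) : ℝ)) ^ q = (1 + ‖ξ‖ ^ 2) ^ (-q / 2) := by
  rw [← Real.rpow_mul (by positivity)]
  ring_nf

lemma one_add_norm_sq_rpow_neg_half_le_one (ξ : E) : (1 + ‖ξ‖ ^ 2) ^ (-(1 / 2) : ℝ) ≤ 1 :=
  Real.rpow_le_one_of_one_le_of_nonpos (by nlinarith [norm_nonneg ξ]) (by norm_num)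

lemma norm_mul_one_add_norm_sq_rpow_neg_half_le_one (ξ : E) :
    ‖ξ‖ * (1 + ‖ξ‖ ^ 2) ^ (-(1 / 2) : ℝ) ≤ 1 := by
  have hsqrt : ‖ξ‖ ≤ √(1 + ‖ξ‖ ^ 2) := Real.le_sqrt_of_sq_le (by linarith)
  rw [Real.rpow_neg (by positivity), ← Real.sqrt_eq_rpow, ← div_eq_mul_inv]
  exact div_le_one_of_le₀ hsqrt (Real.sqrt_nonneg _)

end

section

variable {E : Type*} [NormedAddCommGroup E] [NormedSpace ℝ E]

lemma one_add_norm_smul_sq_rpow_neg_le {v s : ℝ} (hv₀ : 0 < v) (hv₁ : v ≤ 1) (hs : 0 ≤ s)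
    (ξ : E) : (1 + ‖v • ξ‖ ^ 2) ^ (-s) ≤ v ^ (-(2 * s)) * (1 + ‖ξ‖ ^ 2) ^ (-s) := by
  have hle : v ^ 2 * (1 + ‖ξ‖ ^ 2) ≤ 1 + ‖v • ξ‖ ^ 2 := by
    rw [norm_smul, Real.norm_of_nonneg hv₀.le]
    nlinarith [sq_nonneg ‖ξ‖]
  calc (1 + ‖v • ξ‖ ^ 2) ^ (-s) ≤ (v ^ 2 * (1 + ‖ξ‖ ^ 2)) ^ (-s) :=
        Real.rpow_le_rpow_of_nonpos (by positivity) hle (by linarith)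
    _ = v ^ (-(2 * s)) * (1 + ‖ξ‖ ^ 2) ^ (-s) := by
        rw [Real.mul_rpow (by positivity) (by positivity), ← Real.rpow_natCast,
          ← Real.rpow_mul hv₀.le]
        ring_nf

lemma integral_rpow_le_of_lt_neg_one_s12 {b q : ℝ} (hb₀ : 0 < b) (hb₁ : b ≤ 1) (hq : q < -1) :
    ∫ v in b..1, v ^ q ≤ b ^ (q + 1) / -(q + 1) := by
  rw [integral_rpow (Or.inr ⟨hq.ne, by simp [uIcc_of_le hb₁, hb₀.not_ge]⟩), Real.one_rpow,
    ← neg_div_neg_eq, neg_sub]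
  gcongr
  · linarith
  · linarith

lemma continuous_rpow_mul_comp_smul {h : E → ℝ} (hcont : Continuous h) {p : ℝ} (hp : 0 ≤ p)
    (ξ : E) : Continuous fun v : ℝ => v ^ p * h (v • ξ) := by
  fun_prop

lemma integral_rpow_mul_const (b : ℝ) {p : ℝ} (hp : -1 < p) (m : ℝ) :
    ∫ v in 0..b, v ^ p * m = m * b ^ (p + 1) / (p + 1) := by
  rw [integral_mul_const, integral_rpow (Or.inl hp), Real.zero_rpow (by linarith)]
  ring

variable {h : E → ℝ} {p : ℝ}

theorem le_integral_rpow_mul_comp_smul (hcont : Continuous h) (hnn : ∀ x, 0 ≤ h x)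
    {m η : ℝ} (hη₀ : 0 ≤ η) (hη₁ : η ≤ 1) (hm : ∀ x, ‖x‖ ≤ η → m ≤ h x) (hp : 0 ≤ p) (ξ : E) :
    m * η ^ (p + 1) / (p + 1) * (1 + ‖ξ‖ ^ 2) ^ (-(p + 1) / 2)
      ≤ ∫ v in 0..1, v ^ p * h (v • ξ) := by
  set T := (1 + ‖ξ‖ ^ 2) ^ (-(1 / 2) : ℝ)
  have hT₀ : 0 ≤ T := by positivity
  have hb₁ : η * T ≤ 1 := mul_le_one₀ hη₁ hT₀ (one_add_norm_sq_rpow_neg_half_le_one ξ)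
  have hf := continuous_rpow_mul_comp_smul hcont hp ξ
  have hnear : ∀ v ∈ Icc 0 (η * T), v ^ p * m ≤ v ^ p * h (v • ξ) := by
    refine fun v hv => mul_le_mul_of_nonneg_left (hm _ ?_) (by positivity [hv.1])
    rw [norm_smul, Real.norm_of_nonneg hv.1]
    calc v * ‖ξ‖ ≤ η * (‖ξ‖ * T) := by nlinarith [hv.2, norm_nonneg ξ]
      _ ≤ η := mul_le_of_le_one_right hη₀ (norm_mul_one_add_norm_sq_rpow_neg_half_le_one ξ)
  calc m * η ^ (p + 1) / (p + 1) * (1 + ‖ξ‖ ^ 2) ^ (-(p + 1) / 2)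
      = ∫ v in 0..η * T, v ^ p * m := by
        rw [integral_rpow_mul_const _ (by linarith), Real.mul_rpow hη₀ hT₀,
          one_add_norm_sq_rpow_neg_half_rpow]
        ring
    _ ≤ ∫ v in 0..η * T, v ^ p * h (v • ξ) :=
        integral_mono_on (by positivity)
          (((Real.continuous_rpow_const hp).mul continuous_const).intervalIntegrable _ _)
          (hf.intervalIntegrable _ _) hnear
    _ ≤ ∫ v in 0..1, v ^ p * h (v • ξ) :=
        integral_mono_interval le_rfl (by positivity) hb₁
          (MeasureTheory.ae_restrict_of_forall_mem measurableSet_Ioc fun v hv =>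
            mul_nonneg (Real.rpow_nonneg hv.1.le _) (hnn _)) (hf.intervalIntegrable _ _)

theorem integral_rpow_mul_comp_smul_le_of_le (hcont : Continuous h) {M : ℝ}
    (hM : ∀ x, h x ≤ M) (hp : 0 ≤ p) {b : ℝ} (hb : 0 ≤ b) (ξ : E) :
    ∫ v in 0..b, v ^ p * h (v • ξ) ≤ M * b ^ (p + 1) / (p + 1) := by
  rw [← integral_rpow_mul_const b (by linarith) M]
  exact integral_mono_on hb ((continuous_rpow_mul_comp_smul hcont hp ξ).intervalIntegrable _ _)
    (((Real.continuous_rpow_const hp).mul continuous_const).intervalIntegrable _ _)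
    fun v hv => mul_le_mul_of_nonneg_left (hM _) (Real.rpow_nonneg hv.1 _)

theorem integral_rpow_mul_comp_smul_le_of_decay (hcont : Continuous h) {C₀ s : ℝ}
    (hC₀ : 0 ≤ C₀) (hdecay : ∀ x, h x ≤ C₀ * (1 + ‖x‖ ^ 2) ^ (-s)) (hp : 0 ≤ p)
    (hps : p + 1 < 2 * s) {b : ℝ} (hb₀ : 0 < b) (hb₁ : b ≤ 1) (ξ : E) :
    ∫ v in b..1, v ^ p * h (v • ξ)
      ≤ C₀ * (1 + ‖ξ‖ ^ 2) ^ (-s) * (b ^ (p - 2 * s + 1) / (2 * s - p - 1)) := by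
  have hfar : ∀ v ∈ Icc b 1,
      v ^ p * h (v • ξ) ≤ v ^ (p - 2 * s) * (C₀ * (1 + ‖ξ‖ ^ 2) ^ (-s)) := by
    intro v hv
    have hv₀ : 0 < v := hb₀.trans_le hv.1
    calc v ^ p * h (v • ξ) ≤ v ^ p * (C₀ * (v ^ (-(2 * s)) * (1 + ‖ξ‖ ^ 2) ^ (-s))) := by
          gcongr
          exact (hdecay _).trans (mul_le_mul_of_nonneg_left
            (one_add_norm_smul_sq_rpow_neg_le hv₀ hv.2 (by linarith) ξ) hC₀)
      _ = v ^ (p - 2 * s) * (C₀ * (1 + ‖ξ‖ ^ 2) ^ (-s)) := by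
          rw [sub_eq_add_neg, Real.rpow_add hv₀]
          ring
  have hint : IntervalIntegrable (fun v => v ^ (p - 2 * s)) MeasureTheory.volume b 1 :=
    intervalIntegrable_rpow (Or.inr (by simp [uIcc_of_le hb₁, hb₀.not_ge]))
  calc ∫ v in b..1, v ^ p * h (v • ξ)
      ≤ ∫ v in b..1, v ^ (p - 2 * s) * (C₀ * (1 + ‖ξ‖ ^ 2) ^ (-s)) :=
        integral_mono_on hb₁ ((continuous_rpow_mul_comp_smul hcont hp ξ).intervalIntegrable _ _)
          (hint.mul_const _) hfar
    _ ≤ C₀ * (1 + ‖ξ‖ ^ 2) ^ (-s) * (b ^ (p - 2 * s + 1) / (2 * s - p - 1)) := by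
        rw [integral_mul_const, mul_comm]
        gcongr
        exact (integral_rpow_le_of_lt_neg_one_s12 hb₀ hb₁ (by linarith)).trans_eq (by ring_nf)

theorem integral_rpow_mul_comp_smul_le (hcont : Continuous h) {C₀ s : ℝ}
    (hC₀ : 0 ≤ C₀) (hdecay : ∀ x, h x ≤ C₀ * (1 + ‖x‖ ^ 2) ^ (-s)) (hp : 0 ≤ p)
    (hps : p + 1 < 2 * s) (ξ : E) :
    ∫ v in 0..1, v ^ p * h (v • ξ)
      ≤ C₀ * (1 / (p + 1) + 1 / (2 * s - p - 1)) * (1 + ‖ξ‖ ^ 2) ^ (-(p + 1) / 2) := by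
  set T := (1 + ‖ξ‖ ^ 2) ^ (-(1 / 2) : ℝ)
  have hT₀ : 0 < T := by positivity
  have hT₁ : T ≤ 1 := one_add_norm_sq_rpow_neg_half_le_one ξ
  have hbounded : ∀ x, h x ≤ C₀ := fun x => (hdecay x).trans <| mul_le_of_le_one_right hC₀ <|
    Real.rpow_le_one_of_one_le_of_nonpos (by nlinarith [norm_nonneg x]) (by linarith)
  have hf := continuous_rpow_mul_comp_smul hcont hp ξ
  rw [← integral_add_adjacent_intervals (hf.intervalIntegrable 0 T) (hf.intervalIntegrable T 1)]
  have hnear := integral_rpow_mul_comp_smul_le_of_le hcont hbounded hp hT₀.le ξ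
  have hfar := integral_rpow_mul_comp_smul_le_of_decay hcont hC₀ hdecay hp hps hT₀ hT₁ ξ
  have hexp : (1 + ‖ξ‖ ^ 2) ^ (-s) * T ^ (p - 2 * s + 1) = (1 + ‖ξ‖ ^ 2) ^ (-(p + 1) / 2) := by
    rw [one_add_norm_sq_rpow_neg_half_rpow, ← Real.rpow_add (by positivity)]
    ring_nf
  rw [one_add_norm_sq_rpow_neg_half_rpow] at hnear
  rw [mul_div_assoc', mul_assoc, hexp] at hfar
  calc _ ≤ C₀ * (1 + ‖ξ‖ ^ 2) ^ (-(p + 1) / 2) / (p + 1)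
        + C₀ * (1 + ‖ξ‖ ^ 2) ^ (-(p + 1) / 2) / (2 * s - p - 1) := add_le_add hnear hfar
    _ = _ := by ring

end

/-- **Uniform two-sided bound on the symbol of `U_α = C_X − C_{Y^{(α)}}`.**
If `h : ℝ^d → ℝ` is continuous, nonnegative, `h(0) > 0` and
`h(ξ) ≤ C₀ (1+|ξ|²)^{−s}` with `s > (d+1)/2`, then there are `c, C > 0`
(independent of `α`) with
`c (1+|ξ|²)^{−(d+α)/2} ≤ ∫_0^1 v^{d−1+α} h(vξ) dv ≤ C (1+|ξ|²)^{−(d+α)/2}`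
for all `α ∈ (0,1]` and all `ξ`. -/
theorem stmt_12 (d : ℕ) (hd : 1 ≤ d) (h : EuclideanSpace ℝ (Fin d) → ℝ)
    (hcont : Continuous h) (hnn : ∀ ξ, 0 ≤ h ξ) (h0 : 0 < h 0)
    (C₀ s : ℝ) (hC₀ : 0 < C₀) (hs : ((d : ℝ) + 1) / 2 < s)
    (hdecay : ∀ ξ : EuclideanSpace ℝ (Fin d), h ξ ≤ C₀ * (1 + ‖ξ‖ ^ 2) ^ (-s)) :
    ∃ c C : ℝ, 0 < c ∧ 0 < C ∧ ∀ α ∈ Set.Ioc (0 : ℝ) 1,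
      ∀ ξ : EuclideanSpace ℝ (Fin d),
      c * (1 + ‖ξ‖ ^ 2) ^ (-((d : ℝ) + α) / 2)
          ≤ (∫ v in (0 : ℝ)..1, v ^ ((d : ℝ) - 1 + α) * h (v • ξ)) ∧
      (∫ v in (0 : ℝ)..1, v ^ ((d : ℝ) - 1 + α) * h (v • ξ))
          ≤ C * (1 + ‖ξ‖ ^ 2) ^ (-((d : ℝ) + α) / 2) := by
  obtain ⟨η, hη₀, hη₁, hη⟩ :=
    exists_forall_norm_le_le_of_continuousAt hcont.continuousAt (half_lt_self h0)
  have hd₁ : (1 : ℝ) ≤ d := by exact_mod_cast hd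
  have hgap : 0 < 2 * s - d - 1 := by linarith
  refine ⟨h 0 / 2 * η ^ ((d : ℝ) + 1) / (d + 1), C₀ * (1 + 1 / (2 * s - d - 1)),
    by positivity, by positivity, fun α ⟨hα₀, hα₁⟩ ξ => ?_⟩
  have hp : 0 ≤ (d : ℝ) - 1 + α := by linarith
  have hp₁ : (d : ℝ) - 1 + α + 1 = d + α := by ring
  have lower := le_integral_rpow_mul_comp_smul hcont hnn hη₀.le hη₁ hη hp ξ
  have upper := integral_rpow_mul_comp_smul_le hcont hC₀.le hdecay hp (by linarith) ξ
  rw [hp₁] at lower upper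
  constructor
  · refine le_trans (mul_le_mul_of_nonneg_right ?_ (by positivity)) lower
    gcongr h 0 / 2 * ?_ / ?_
    · exact Real.rpow_le_rpow_of_exponent_ge hη₀ hη₁ (by linarith)
    · linarith
  · refine upper.trans (mul_le_mul_of_nonneg_right ?_ (by positivity))
    gcongr C₀ * (?_ + 1 / ?_)
    · exact div_le_one_of_le₀ (by linarith) (by positivity)
    · linarith
end

section
/- Let d ≥ 1 and let h : ℝ^d → ℝ be continuous with h ≥ 0, h(0) > 0, and h(ξ) ≤ C₀ (1 + |ξ|²)^{−s} for all ξ ∈ ℝ^d, for some constants C₀ > 0 and s > (d+1)/2. For α ≥ 0 define u_α(ξ) = ∫_0^1 v^{d−1+α} h(vξ) dv, which is strictly positive for every ξ. Then for every α₀ ∈ (0, 1] and every measurable g : ℝ^d → ℂ with ∫_{ℝ^d} |g(ξ)|² dξ < ∞, lim_{α → 0⁺} ∫_{ℝ^d} (1 + |ξ|²)^{−(d+α₀)/2} · (u_α(ξ)^{−1/2} − u_0(ξ)^{−1/2})² · |g(ξ)|² dξ = 0. -/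
/-!
Since `h` is continuous with `h 0 > 0`, it stays above `h 0 / 2` on a ball of radius `δ`, and the
segment `v ξ`, `0 ≤ v ≤ δ / ⟨ξ⟩` with `⟨ξ⟩ = (1 + |ξ|²)^{1/2}`, lies in that ball. Integrating only
over this segment gives `u_α(ξ) ≥ c ⟨ξ⟩^{-(d+α)}` uniformly in `α ∈ [0, 1]`, so for `α ≤ α₀` the
weight `⟨ξ⟩^{-(d+α₀)}` times `u_α(ξ)⁻¹` is bounded and the integrand is dominated by a multiple of
`|g|²`. Pointwise `u_α(ξ) → u_0(ξ)` by dominated convergence in the exponent, and dominated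
convergence in `ξ` concludes.
-/

open MeasureTheory Filter Set Topology Real

section RadialMoment

variable {E : Type*} [NormedAddCommGroup E] [NormedSpace ℝ E] {h : E → ℝ} {r : ℝ}

/-- `u_α(ξ)` of the paper is `radialMoment h (d - 1 + α) ξ`. -/
noncomputable def radialMoment (h : E → ℝ) (r : ℝ) (ξ : E) : ℝ :=
  ∫ v in (0 : ℝ)..1, v ^ r * h (v • ξ)

theorem continuous_radialMoment (hh : Continuous h) (hr : 0 ≤ r) :
    Continuous (radialMoment h r) :=
  intervalIntegral.continuous_parametric_intervalIntegral_of_continuous'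
    (((continuous_rpow_const hr).comp continuous_snd).mul
      (hh.comp (continuous_snd.smul continuous_fst))) 0 1

theorem continuousOn_radialMoment_exponent (hh : Continuous h) (ξ : E) :
    ContinuousOn (fun r => radialMoment h r ξ) (Ici 0) := by
  have hseg : Continuous fun v : ℝ => h (v • ξ) := hh.comp (continuous_id.smul continuous_const)
  obtain ⟨M, hM⟩ := (isCompact_Icc (a := (0 : ℝ)) (b := 1)).exists_bound_of_continuousOn
    hseg.continuousOn
  intro r _
  refine intervalIntegral.continuousWithinAt_of_dominated_interval (bound := fun _ => M) ?_ ?_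
    intervalIntegrable_const ?_
  · filter_upwards [self_mem_nhdsWithin] with r' hr'
    exact ((continuous_rpow_const hr').mul hseg).aestronglyMeasurable
  · filter_upwards [self_mem_nhdsWithin] with r' hr'
    refine ae_of_all _ fun v hv => ?_
    rw [uIoc_of_le zero_le_one] at hv
    rw [norm_mul, norm_of_nonneg (rpow_nonneg hv.1.le _)]
    calc v ^ r' * ‖h (v • ξ)‖ ≤ 1 * M :=
          mul_le_mul (rpow_le_one hv.1.le hv.2 hr') (hM v (Ioc_subset_Icc_self hv))
            (norm_nonneg _) zero_le_one
      _ = M := one_mul M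
  · refine ae_of_all _ fun v hv => ?_
    rw [uIoc_of_le zero_le_one] at hv
    exact ((continuousAt_const_rpow hv.1.ne').mul continuousAt_const).continuousWithinAt

theorem tendsto_radialMoment_add_nhdsGT (hh : Continuous h) (hr : 0 ≤ r) (ξ : E) :
    Tendsto (fun α => radialMoment h (r + α) ξ) (𝓝[>] 0) (𝓝 (radialMoment h r ξ)) := by
  have hcont : ContinuousWithinAt (fun α => radialMoment h (r + α) ξ) (Ici 0) 0 :=
    (continuousOn_radialMoment_exponent hh ξ).comp (continuous_const_add r).continuousOn
      (fun α (hα : 0 ≤ α) => show 0 ≤ r + α by linarith) 0 self_mem_Ici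
  simpa using (hcont.mono Ioi_subset_Ici_self).tendsto

theorem le_radialMoment_of_le_on_Icc (hh : Continuous h) (hnn : ∀ x, 0 ≤ h x) (hr : 0 ≤ r)
    {t m : ℝ} {ξ : E} (ht0 : 0 ≤ t) (ht1 : t ≤ 1) (hm : ∀ v ∈ Icc 0 t, m ≤ h (v • ξ)) :
    m * t ^ (r + 1) / (r + 1) ≤ radialMoment h r ξ := by
  have hint (a b : ℝ) : IntervalIntegrable (fun v : ℝ => v ^ r * h (v • ξ)) volume a b :=
    ((continuous_rpow_const hr).mul
      (hh.comp (continuous_id.smul continuous_const))).intervalIntegrable a b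
  calc m * t ^ (r + 1) / (r + 1) = ∫ v in (0 : ℝ)..t, v ^ r * m := by
        rw [intervalIntegral.integral_mul_const, integral_rpow (Or.inl (by linarith)),
          zero_rpow (by linarith)]
        ring
    _ ≤ ∫ v in (0 : ℝ)..t, v ^ r * h (v • ξ) :=
        intervalIntegral.integral_mono_on ht0
          ((intervalIntegral.intervalIntegrable_rpow' (by linarith)).mul_const _) (hint 0 t)
          fun v hv => mul_le_mul_of_nonneg_left (hm v hv) (rpow_nonneg hv.1 r)
    _ ≤ radialMoment h r ξ := by
        rw [radialMoment,
          ← intervalIntegral.integral_add_adjacent_intervals (hint 0 t) (hint t 1)]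
        exact le_add_of_nonneg_right (intervalIntegral.integral_nonneg ht1 fun v hv =>
          mul_nonneg (rpow_nonneg (ht0.trans hv.1) _) (hnn _))

theorem le_radialMoment_of_le_on_closedBall (hh : Continuous h) (hnn : ∀ x, 0 ≤ h x)
    {δ m R : ℝ} (hδ0 : 0 < δ) (hδ1 : δ ≤ 1) (hm0 : 0 ≤ m)
    (hm : ∀ x ∈ Metric.closedBall (0 : E) δ, m ≤ h x) (hr : 0 ≤ r) (hrR : r ≤ R) (ξ : E) :
    m * δ ^ (R + 1) / (R + 1) * (1 + ‖ξ‖ ^ 2) ^ (-(r + 1) / 2) ≤ radialMoment h r ξ := by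
  set X := 1 + ‖ξ‖ ^ 2
  have hX : 0 < X := by positivity
  have hsX : 0 < √X := sqrt_pos.2 hX
  have hξ : ‖ξ‖ ≤ √X := le_sqrt_of_sq_le (le_add_of_nonneg_left zero_le_one)
  have hsX1 : 1 ≤ √X := one_le_sqrt.2 (le_add_of_nonneg_right (sq_nonneg _))
  have ht1 : δ / √X ≤ 1 := (div_le_one hsX).2 (hδ1.trans hsX1)
  have hball : ∀ v ∈ Icc 0 (δ / √X), m ≤ h (v • ξ) := fun v hv => hm _ <| by
    rw [mem_closedBall_zero_iff, norm_smul, norm_of_nonneg hv.1]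
    calc v * ‖ξ‖ ≤ δ / √X * √X := mul_le_mul hv.2 hξ (norm_nonneg _) (by positivity)
      _ = δ := div_mul_cancel₀ δ hsX.ne'
  have hpow : (δ / √X) ^ (r + 1) = δ ^ (r + 1) * X ^ (-(r + 1) / 2) := by
    rw [div_rpow hδ0.le hsX.le, sqrt_eq_rpow, ← rpow_mul hX.le, neg_div, rpow_neg hX.le,
      div_eq_mul_inv, one_div_mul_eq_div]
  refine le_trans ?_ (le_radialMoment_of_le_on_Icc hh hnn hr (by positivity) ht1 hball)
  rw [hpow, ← mul_assoc, mul_div_right_comm _ (X ^ _)]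
  gcongr ?_ * _
  exact div_le_div₀ (by positivity) (mul_le_mul_of_nonneg_left
    (rpow_le_rpow_of_exponent_ge hδ0 hδ1 (by linarith)) hm0) (by linarith) (by linarith)

theorem exists_pos_mul_le_radialMoment (hh : Continuous h) (hnn : ∀ x, 0 ≤ h x) (h0 : 0 < h 0)
    {R : ℝ} (hR : 0 ≤ R) :
    ∃ c > 0, ∀ r ∈ Icc 0 R, ∀ ξ : E, c * (1 + ‖ξ‖ ^ 2) ^ (-(r + 1) / 2) ≤ radialMoment h r ξ := by
  obtain ⟨δ, hδ0, hδ⟩ := Metric.nhds_basis_closedBall.eventually_iff.1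
    (hh.continuousAt.eventually (lt_mem_nhds (half_lt_self h0)))
  refine ⟨h 0 / 2 * min δ 1 ^ (R + 1) / (R + 1), by positivity, fun r hr ξ =>
    le_radialMoment_of_le_on_closedBall hh hnn (lt_min hδ0 one_pos) (min_le_right _ _)
      (by positivity) (fun x hx => (hδ ?_).le) hr.1 hr.2 ξ⟩
  exact Metric.closedBall_subset_closedBall (min_le_left _ _) hx

theorem radialMoment_pos (hh : Continuous h) (hnn : ∀ x, 0 ≤ h x) (h0 : 0 < h 0) (hr : 0 ≤ r)
    (ξ : E) : 0 < radialMoment h r ξ := by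
  obtain ⟨c, hc, hle⟩ := exists_pos_mul_le_radialMoment hh hnn h0 hr
  exact (mul_pos hc (rpow_pos_of_pos (by positivity) _)).trans_le (hle r ⟨hr, le_rfl⟩ ξ)

end RadialMoment

theorem sq_rpow_neg_half_sub_le {a b : ℝ} (ha : 0 < a) (hb : 0 < b) :
    (a ^ (-(1 : ℝ) / 2) - b ^ (-(1 : ℝ) / 2)) ^ 2 ≤ a⁻¹ + b⁻¹ := by
  have hsq {x : ℝ} (hx : 0 < x) : (x ^ (-(1 : ℝ) / 2)) ^ 2 = x⁻¹ := by
    rw [← rpow_natCast, ← rpow_mul hx.le]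
    norm_num [rpow_neg_one]
  rw [← hsq ha, ← hsq hb]
  nlinarith [rpow_nonneg ha.le (-(1 : ℝ) / 2), rpow_nonneg hb.le (-(1 : ℝ) / 2),
    mul_nonneg (rpow_nonneg ha.le (-(1 : ℝ) / 2)) (rpow_nonneg hb.le (-(1 : ℝ) / 2))]

theorem rpow_mul_inv_le_inv {X u c p q : ℝ} (hX : 1 ≤ X) (hc : 0 < c) (hu : c * X ^ q ≤ u)
    (hpq : p ≤ q) : X ^ p * u⁻¹ ≤ c⁻¹ := by
  have hu0 : 0 < u := (mul_pos hc (rpow_pos_of_pos (by linarith) q)).trans_le hu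
  rw [mul_inv_le_iff₀ hu0, inv_mul_eq_div, le_div_iff₀' hc]
  exact (mul_le_mul_of_nonneg_left (rpow_le_rpow_of_exponent_le hX hpq) hc.le).trans hu

theorem tendsto_integral_mul_sq_rpow_neg_half_sub {X : Type*} [MeasurableSpace X] {μ : Measure X}
    {l : Filter ℝ} [l.IsCountablyGenerated] {U : ℝ → X → ℝ} {U₀ w G : X → ℝ} {C : ℝ}
    (hU_meas : ∀ᶠ α in l, Measurable (U α)) (hU₀_meas : Measurable U₀) (hw_meas : Measurable w)
    (hG : Integrable G μ) (hU_pos : ∀ᶠ α in l, ∀ x, 0 < U α x) (hU₀_pos : ∀ x, 0 < U₀ x)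
    (hw : ∀ x, 0 ≤ w x) (hU_bound : ∀ᶠ α in l, ∀ x, w x * (U α x)⁻¹ ≤ C)
    (hU₀_bound : ∀ x, w x * (U₀ x)⁻¹ ≤ C) (hlim : ∀ x, Tendsto (fun α => U α x) l (𝓝 (U₀ x))) :
    Tendsto (fun α => ∫ x, w x * (U α x ^ (-(1 : ℝ) / 2) - U₀ x ^ (-(1 : ℝ) / 2)) ^ 2 * G x ∂μ)
      l (𝓝 0) := by
  have key := tendsto_integral_filter_of_dominated_convergence (l := l) (μ := μ)
    (F := fun α x => w x * (U α x ^ (-(1 : ℝ) / 2) - U₀ x ^ (-(1 : ℝ) / 2)) ^ 2 * G x)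
    (f := fun _ => 0) (fun x => 2 * C * ‖G x‖)
    ?_ ?_ (hG.norm.const_mul _) (ae_of_all _ fun x => ?_)
  · simpa using key
  · filter_upwards [hU_meas] with α hα
    exact (hw_meas.mul (((hα.pow_const _).sub (hU₀_meas.pow_const _)).pow_const 2)
      ).aestronglyMeasurable.mul hG.aestronglyMeasurable
  · filter_upwards [hU_pos, hU_bound] with α hpos hbound
    refine ae_of_all _ fun x => ?_
    have hsq := sq_rpow_neg_half_sub_le (hpos x) (hU₀_pos x)
    rw [norm_mul, norm_of_nonneg (mul_nonneg (hw x) (sq_nonneg _))]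
    calc w x * (U α x ^ (-(1 : ℝ) / 2) - U₀ x ^ (-(1 : ℝ) / 2)) ^ 2 * ‖G x‖
        ≤ (w x * (U α x)⁻¹ + w x * (U₀ x)⁻¹) * ‖G x‖ := by
          rw [← mul_add]
          exact mul_le_mul_of_nonneg_right (mul_le_mul_of_nonneg_left hsq (hw x)) (norm_nonneg _)
      _ ≤ 2 * C * ‖G x‖ := by gcongr; linarith [hbound x, hU₀_bound x]
  · have := (((hlim x).rpow_const (p := -(1 : ℝ) / 2) (Or.inl (hU₀_pos x).ne')).sub_const
      (U₀ x ^ (-(1 : ℝ) / 2))).pow 2 |>.const_mul (w x) |>.mul_const (G x)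
    simpa using this

theorem stmt_13_general (d : ℕ) (hd : 1 ≤ d) (h : EuclideanSpace ℝ (Fin d) → ℝ)
    (hcont : Continuous h) (hnn : ∀ ξ, 0 ≤ h ξ) (h0 : 0 < h 0)
    (u : ℝ → EuclideanSpace ℝ (Fin d) → ℝ)
    (hu : ∀ α : ℝ, 0 ≤ α → ∀ ξ : EuclideanSpace ℝ (Fin d),
      u α ξ = ∫ v in (0 : ℝ)..1, v ^ ((d : ℝ) - 1 + α) * h (v • ξ)) :
    (∀ α : ℝ, 0 ≤ α → ∀ ξ : EuclideanSpace ℝ (Fin d), 0 < u α ξ) ∧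
    ∀ α₀ ∈ Set.Ioc (0 : ℝ) 1, ∀ g : EuclideanSpace ℝ (Fin d) → ℂ,
      Measurable g → Integrable (fun ξ => ‖g ξ‖ ^ 2) →
      Tendsto
        (fun α : ℝ => ∫ ξ : EuclideanSpace ℝ (Fin d),
          (1 + ‖ξ‖ ^ 2) ^ (-((d : ℝ) + α₀) / 2)
            * ((u α ξ) ^ (-(1 : ℝ) / 2) - (u 0 ξ) ^ (-(1 : ℝ) / 2)) ^ 2
            * ‖g ξ‖ ^ 2)
        (nhdsWithin 0 (Set.Ioi 0)) (nhds 0) := by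
  have hd' : (0 : ℝ) ≤ d - 1 := sub_nonneg.2 (by exact_mod_cast hd)
  have hu' : ∀ α, 0 ≤ α → u α = radialMoment h (d - 1 + α) := fun α hα => funext (hu α hα)
  have hu_pos : ∀ α, 0 ≤ α → ∀ ξ, 0 < u α ξ := fun α hα ξ => by
    rw [hu' α hα]; exact radialMoment_pos hcont hnn h0 (by linarith) ξ
  have hu_meas : ∀ α, 0 ≤ α → Measurable (u α) := fun α hα => by
    rw [hu' α hα]; exact (continuous_radialMoment hcont (by linarith)).measurable
  refine ⟨hu_pos, fun α₀ hα₀ g _ hg => ?_⟩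
  obtain ⟨c, hc, hlow⟩ := exists_pos_mul_le_radialMoment hcont hnn h0 (Nat.cast_nonneg' d)
  have hweight : ∀ α ∈ Icc 0 α₀, ∀ ξ : EuclideanSpace ℝ (Fin d),
      (1 + ‖ξ‖ ^ 2) ^ (-((d : ℝ) + α₀) / 2) * (u α ξ)⁻¹ ≤ c⁻¹ := fun α hα ξ => by
    rw [hu' α hα.1]
    exact rpow_mul_inv_le_inv (le_add_of_nonneg_right (sq_nonneg _)) hc
      (hlow _ ⟨by linarith [hα.1], by linarith [hα.2, hα₀.2]⟩ ξ) (by linarith [hα.2])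
  have hα : ∀ᶠ α in 𝓝[>] (0 : ℝ), α ∈ Ioc 0 α₀ := Ioc_mem_nhdsGT hα₀.1
  refine tendsto_integral_mul_sq_rpow_neg_half_sub (hα.mono fun α hα => hu_meas α hα.1.le)
    (hu_meas 0 le_rfl) (by fun_prop) hg (hα.mono fun α hα => hu_pos α hα.1.le) (hu_pos 0 le_rfl)
    (fun _ => by positivity) (hα.mono fun α hα => hweight α (Ioc_subset_Icc_self hα))
    (hweight 0 ⟨le_rfl, hα₀.1.le⟩) fun ξ => ?_
  rw [hu' 0 le_rfl, add_zero]
  exact (tendsto_radialMoment_add_nhdsGT hcont hd' ξ).congr' <|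
    eventually_nhdsWithin_of_forall fun α hα => (congrFun (hu' α (le_of_lt hα)) ξ).symm

/-- **Symbol-level convergence `U_α^{−1/2} → C_X^{−1/2}` as `α → 0⁺`.**
With `u_α(ξ) = ∫_0^1 v^{d−1+α} h(vξ) dv` (strictly positive for every `ξ`),
for every `α₀ ∈ (0,1]` and every measurable square-integrable `g : ℝ^d → ℂ`,
`∫ (1+|ξ|²)^{−(d+α₀)/2} (u_α(ξ)^{−1/2} − u_0(ξ)^{−1/2})² |g(ξ)|² dξ → 0`
as `α → 0⁺`. -/
theorem stmt_13 (d : ℕ) (hd : 1 ≤ d) (h : EuclideanSpace ℝ (Fin d) → ℝ)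
    (hcont : Continuous h) (hnn : ∀ ξ, 0 ≤ h ξ) (h0 : 0 < h 0)
    (C₀ s : ℝ) (hC₀ : 0 < C₀) (hs : ((d : ℝ) + 1) / 2 < s)
    (hdecay : ∀ ξ : EuclideanSpace ℝ (Fin d), h ξ ≤ C₀ * (1 + ‖ξ‖ ^ 2) ^ (-s))
    (u : ℝ → EuclideanSpace ℝ (Fin d) → ℝ)
    (hu : ∀ α : ℝ, 0 ≤ α → ∀ ξ : EuclideanSpace ℝ (Fin d),
      u α ξ = ∫ v in (0 : ℝ)..1, v ^ ((d : ℝ) - 1 + α) * h (v • ξ)) :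
    (∀ α : ℝ, 0 ≤ α → ∀ ξ : EuclideanSpace ℝ (Fin d), 0 < u α ξ) ∧
    ∀ α₀ ∈ Set.Ioc (0 : ℝ) 1, ∀ g : EuclideanSpace ℝ (Fin d) → ℂ,
      Measurable g → Integrable (fun ξ => ‖g ξ‖ ^ 2) →
      Tendsto
        (fun α : ℝ => ∫ ξ : EuclideanSpace ℝ (Fin d),
          (1 + ‖ξ‖ ^ 2) ^ (-((d : ℝ) + α₀) / 2)
            * ((u α ξ) ^ (-(1 : ℝ) / 2) - (u 0 ξ) ^ (-(1 : ℝ) / 2)) ^ 2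
            * ‖g ξ‖ ^ 2)
        (nhdsWithin 0 (Set.Ioi 0)) (nhds 0) :=
  stmt_13_general d hd h hcont hnn h0 u hu
end

section
/- Let d ≥ 1, α > 0, and let k : ℝ^d → ℝ be twice continuously differentiable with k(−x) = k(x) for all x, k(0) = 1, 0 ≤ k(x) ≤ 1 for all x, and k(x) = 0 for |x| > 1. Then there exists a constant C > 0 such that for every δ ∈ (0, 1] and every x ∈ ℝ^d with 0 < |x| ≤ 1, ∫_0^∞ k(e^u x)(1 − δ^α e^{−αu}) du ≥ log(1/|x|) − C. -/
/-!
Evenness kills the first-order term of `k` at the origin, so the `C²` bound gives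
`k y ≥ 1 - M ‖y‖²` for `‖y‖ ≤ 1`. With `L = log (1 / ‖x‖)` we have `‖e^u x‖ = e^(u - L)`, so the
integrand vanishes for `u > L`, while on `[0, L]` it is at least
`1 - M e^(2(u - L)) - δ^α e^(-αu)`, whose integral over `[0, L]` is at least `L - M / 2 - 1 / α`.
-/

open MeasureTheory Real Set Metric

theorem Function.Even.fderiv_zero {E F : Type*}
    [NormedAddCommGroup E] [NormedSpace ℝ E] [NormedAddCommGroup F] [NormedSpace ℝ F]
    {f : E → F} (hf : f.Even) : fderiv ℝ f 0 = 0 := by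
  have h := (ContinuousLinearEquiv.neg ℝ : E ≃L[ℝ] E).comp_right_fderiv (f := f) (x := 0)
  rw [show f ∘ ContinuousLinearEquiv.neg ℝ = f from funext hf] at h
  have h2 : (2 : ℝ) • fderiv ℝ f 0 = 0 := by
    rw [two_smul]
    nth_rw 1 [h]
    ext v
    simp
  exact (smul_eq_zero.mp h2).resolve_left two_ne_zero

theorem exists_norm_sub_le_mul_sq {E F : Type*} [NormedAddCommGroup E] [NormedSpace ℝ E]
    [ProperSpace E] [NormedAddCommGroup F] [NormedSpace ℝ F]
    {f : E → F} (hf : ContDiff ℝ 2 f) (hf0 : fderiv ℝ f 0 = 0) :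
    ∃ M, 0 ≤ M ∧ ∀ y, ‖y‖ ≤ 1 → ‖f y - f 0‖ ≤ M * ‖y‖ ^ 2 := by
  have hf' : ContDiff ℝ 1 (fderiv ℝ f) := hf.fderiv_right (by norm_num)
  obtain ⟨M, hM⟩ := (isCompact_closedBall (0 : E) 1).exists_bound_of_continuousOn
    (hf'.continuous_fderiv one_ne_zero).continuousOn
  have hM0 : 0 ≤ M := (norm_nonneg _).trans (hM 0 (mem_closedBall_self zero_le_one))
  have hfderiv : ∀ z ∈ closedBall (0 : E) 1, ‖fderiv ℝ f z‖ ≤ M * ‖z‖ := fun z hz => by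
    simpa [hf0] using (convex_closedBall (0 : E) 1).norm_image_sub_le_of_norm_fderiv_le
      (fun w _ => (hf'.differentiable one_ne_zero).differentiableAt) hM
      (mem_closedBall_self zero_le_one) hz
  refine ⟨M, hM0, fun y hy => ?_⟩
  have hball : closedBall (0 : E) ‖y‖ ⊆ closedBall 0 1 := closedBall_subset_closedBall hy
  have := (convex_closedBall (0 : E) ‖y‖).norm_image_sub_le_of_norm_fderiv_le
    (fun w _ => (hf.differentiable two_ne_zero).differentiableAt)
    (fun z hz => (hfderiv z (hball hz)).trans
      (mul_le_mul_of_nonneg_left (mem_closedBall_zero_iff.mp hz) hM0))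
    (mem_closedBall_self (norm_nonneg y)) (mem_closedBall_zero_iff.mpr le_rfl)
  simpa [sq, mul_assoc] using this

theorem hasDerivAt_sub_exp_add_exp (c α s L u : ℝ) (hα : α ≠ 0) :
    HasDerivAt (fun u => u - c / 2 * exp (2 * (u - L)) + s / α * exp (-α * u))
      (1 - c * exp (2 * (u - L)) - s * exp (-α * u)) u := by
  have h1 : HasDerivAt (fun u => exp (2 * (u - L))) (exp (2 * (u - L)) * 2) u := by
    simpa using (((hasDerivAt_id u).sub_const L).const_mul 2).exp
  have h2 : HasDerivAt (fun u => exp (-α * u)) (exp (-α * u) * (-α)) u := by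
    simpa using ((hasDerivAt_id u).const_mul (-α)).exp
  refine (((hasDerivAt_id' u).fun_sub (h1.const_mul (c / 2))).fun_add
    (h2.const_mul (s / α))).congr_deriv ?_
  field_simp
  ring

theorem sub_le_setIntegral_Ioi_mul_one_sub_exp {φ : ℝ → ℝ} (hφ : Continuous φ)
    {L c α s : ℝ} (hL : 0 ≤ L) (hc : 0 ≤ c) (hα : 0 < α) (hs0 : 0 ≤ s) (hs1 : s ≤ 1)
    (hφ_zero : ∀ u, L < u → φ u = 0)
    (hφ_ge : ∀ u ∈ Icc 0 L, 1 - c * exp (2 * (u - L)) ≤ φ u) :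
    L - (c / 2 + 1 / α) ≤ ∫ u in Ioi 0, φ u * (1 - s * exp (-α * u)) := by
  have hsupp : ∫ u in Ioi 0, φ u * (1 - s * exp (-α * u))
      = ∫ u in (0)..L, φ u * (1 - s * exp (-α * u)) := by
    rw [intervalIntegral.integral_of_le hL]
    refine setIntegral_eq_of_subset_of_forall_sdiff_eq_zero measurableSet_Ioi
      Ioc_subset_Ioi_self fun u hu => ?_
    rw [hφ_zero u (lt_of_not_ge fun h => hu.2 ⟨hu.1, h⟩), zero_mul]
  have hpointwise : ∀ u ∈ Icc 0 L, 1 - c * exp (2 * (u - L)) - s * exp (-α * u)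
      ≤ φ u * (1 - s * exp (-α * u)) := fun u hu => by
    have he : s * exp (-α * u) ≤ 1 := by
      have : exp (-α * u) ≤ 1 := exp_le_one_iff.mpr (by nlinarith [hu.1])
      nlinarith [exp_pos (-α * u)]
    linarith [mul_nonneg (sub_nonneg.mpr (hφ_ge u hu)) (sub_nonneg.mpr he),
      mul_nonneg (mul_nonneg hc (exp_pos (2 * (u - L))).le) (mul_nonneg hs0 (exp_pos (-α * u)).le)]
  have hcont : Continuous fun u => 1 - c * exp (2 * (u - L)) - s * exp (-α * u) := by fun_prop
  have hsα : s / α ≤ 1 / α := by gcongr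
  calc L - (c / 2 + 1 / α)
      ≤ (L - c / 2 * exp (2 * (L - L)) + s / α * exp (-α * L))
        - (0 - c / 2 * exp (2 * (0 - L)) + s / α * exp (-α * 0)) := by
        simp only [sub_self, mul_zero, exp_zero, mul_one, zero_sub]
        linarith [mul_nonneg (div_nonneg hc zero_le_two) (exp_pos (2 * -L)).le,
          mul_nonneg (div_nonneg hs0 hα.le) (exp_pos (-α * L)).le]
    _ = ∫ u in (0)..L, 1 - c * exp (2 * (u - L)) - s * exp (-α * u) :=
        (intervalIntegral.integral_eq_sub_of_hasDerivAt
          (fun u _ => hasDerivAt_sub_exp_add_exp c α s L u hα.ne')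
          (hcont.intervalIntegrable 0 L)).symm
    _ ≤ ∫ u in (0)..L, φ u * (1 - s * exp (-α * u)) :=
        intervalIntegral.integral_mono_on hL (hcont.intervalIntegrable 0 L)
          ((hφ.mul (by fun_prop)).intervalIntegrable 0 L) hpointwise
    _ = ∫ u in Ioi 0, φ u * (1 - s * exp (-α * u)) := hsupp.symm

theorem stmt_15_general (d : ℕ) (α : ℝ) (hα : 0 < α)
    (k : EuclideanSpace ℝ (Fin d) → ℝ) (hksmooth : ContDiff ℝ 2 k)
    (hkeven : ∀ x, k (-x) = k x) (hk01 : k 0 = 1)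
    (hksupp : ∀ x : EuclideanSpace ℝ (Fin d), 1 < ‖x‖ → k x = 0) :
    ∃ C : ℝ, 0 < C ∧ ∀ δ ∈ Set.Ioc (0 : ℝ) 1,
      ∀ x : EuclideanSpace ℝ (Fin d), 0 < ‖x‖ → ‖x‖ ≤ 1 →
      Real.log (1 / ‖x‖) - C
        ≤ ∫ u in Set.Ioi (0 : ℝ),
            k (Real.exp u • x) * (1 - δ ^ α * Real.exp (-α * u)) := by
  obtain ⟨M, hM0, hM⟩ := exists_norm_sub_le_mul_sq hksmooth (Function.Even.fderiv_zero hkeven)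
  refine ⟨M / 2 + 1 / α, by positivity, fun δ hδ x hx0 hx1 => ?_⟩
  set L := log (1 / ‖x‖)
  have hnorm : ∀ u, ‖exp u • x‖ = exp (u - L) := fun u => by
    rw [norm_smul, norm_of_nonneg (exp_pos u).le, exp_sub, exp_log (by positivity)]
    field_simp
  refine sub_le_setIntegral_Ioi_mul_one_sub_exp (hksmooth.continuous.comp (by fun_prop))
    (log_nonneg (one_le_one_div hx0 hx1)) hM0 hα (rpow_nonneg hδ.1.le α)
    (rpow_le_one hδ.1.le hδ.2 hα.le) (fun u hu => hksupp _ ?_) (fun u hu => ?_)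
  · rw [hnorm]
    exact one_lt_exp_iff.mpr (sub_pos.mpr hu)
  · have hk := hM _ (by rw [hnorm]; exact exp_le_one_iff.mpr (sub_nonpos.mpr hu.2))
    rw [hk01, hnorm, norm_eq_abs, ← exp_nat_mul, Nat.cast_ofNat] at hk
    exact sub_le_comm.mp (abs_sub_le_iff.mp hk).2

/-- **Lower bound on the covariance of the rescaled tail field.**
If `k` is `C²`, even, `k(0) = 1`, `0 ≤ k ≤ 1` and `k` vanishes for `|x| > 1`,
then there is a constant `C > 0` such that for every `δ ∈ (0,1]` and every `x`
with `0 < |x| ≤ 1`,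
`∫_0^∞ k(e^u x)(1 − δ^α e^{−αu}) du ≥ log(1/|x|) − C`. -/
theorem stmt_15 (d : ℕ) (hd : 1 ≤ d) (α : ℝ) (hα : 0 < α)
    (k : EuclideanSpace ℝ (Fin d) → ℝ) (hksmooth : ContDiff ℝ 2 k)
    (hkeven : ∀ x, k (-x) = k x) (hk01 : k 0 = 1)
    (hk0 : ∀ x, 0 ≤ k x) (hk1 : ∀ x, k x ≤ 1)
    (hksupp : ∀ x : EuclideanSpace ℝ (Fin d), 1 < ‖x‖ → k x = 0) :
    ∃ C : ℝ, 0 < C ∧ ∀ δ ∈ Set.Ioc (0 : ℝ) 1,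
      ∀ x : EuclideanSpace ℝ (Fin d), 0 < ‖x‖ → ‖x‖ ≤ 1 →
      Real.log (1 / ‖x‖) - C
        ≤ ∫ u in Set.Ioi (0 : ℝ),
            k (Real.exp u • x) * (1 - δ ^ α * Real.exp (-α * u)) :=
  stmt_15_general d α hα k hksmooth hkeven hk01 hksupp
end

section
/- Let S be a set, M ≥ 0, and let K : S × S → ℝ be a symmetric kernel that is positive semidefinite (for any points z_1,…,z_n ∈ S and any real numbers c_1,…,c_n one has Σ_{i,j} c_i c_j K(z_i, z_j) ≥ 0) and satisfies K(z, z) ≤ M for all z ∈ S. Then for every N ≥ 1 and all N-tuples x = (x_1,…,x_N) and y = (y_1,…,y_N) of points of S, ℰ(K; x; y) ≤ N·M. -/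
/-!
Test positive semidefiniteness of `K` on the concatenated configuration `(x, y)` with charges
`+1` on `x` and `−1` on `y`: this bounds twice the cross term by the two self-interaction sums.
Splitting each self-interaction sum into twice its off-diagonal part plus its diagonal gives
`2ℰ ≤ Σ_j K(x_j,x_j) + Σ_j K(y_j,y_j) ≤ 2NM`.
-/

/-- The interaction energy
`ℰ(K; x; y) = −Σ_{j<k} K(x_j,x_k) − Σ_{j<k} K(y_j,y_k) + Σ_{j,k} K(x_j,y_k)`. -/
noncomputable def interactionEnergy {S : Type*} {N : ℕ}
    (K : S → S → ℝ) (x y : Fin N → S) : ℝ :=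
  -(∑ j : Fin N, ∑ k : Fin N, if j < k then K (x j) (x k) else 0)
    - (∑ j : Fin N, ∑ k : Fin N, if j < k then K (y j) (y k) else 0)
    + ∑ j : Fin N, ∑ k : Fin N, K (x j) (y k)

open Finset

theorem sum_sum_eq_two_mul_sum_sum_lt_add_sum {ι R : Type*} [Fintype ι] [LinearOrder ι]
    [NonAssocSemiring R] (g : ι → ι → R) (hg : ∀ j k, g j k = g k j) :
    ∑ j, ∑ k, g j k = 2 * ∑ j, ∑ k, (if j < k then g j k else 0) + ∑ j, g j j := by
  have hsplit : ∀ j k, g j k = (if j < k then g j k else 0) + (if k < j then g j k else 0)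
      + (if j = k then g j k else 0) := by
    intro j k
    rcases lt_trichotomy j k with h | rfl | h
    · simp [h, h.ne, not_lt_of_gt h]
    · simp
    · simp [h, h.ne', not_lt_of_gt h]
  have hswap : ∑ j, ∑ k, (if k < j then g j k else 0) = ∑ j, ∑ k, (if j < k then g j k else 0) := by
    rw [sum_comm]
    simp_rw [hg]
  calc ∑ j, ∑ k, g j k
      = ∑ j, ∑ k, ((if j < k then g j k else 0) + (if k < j then g j k else 0)
          + (if j = k then g j k else 0)) := by simp_rw [← hsplit]
    _ = _ := by simp only [sum_add_distrib, hswap, sum_ite_eq, mem_univ, if_true, two_mul]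

def IsPosSemidefKernel {S : Type*} (K : S → S → ℝ) : Prop :=
  ∀ (n : ℕ) (z : Fin n → S) (c : Fin n → ℝ),
    0 ≤ ∑ i : Fin n, ∑ j : Fin n, c i * c j * K (z i) (z j)

theorem IsPosSemidefKernel.two_mul_sum_sum_le {S : Type*} {K : S → S → ℝ}
    (hK : IsPosSemidefKernel K) (hsymm : ∀ a b, K a b = K b a) {m n : ℕ}
    (x : Fin m → S) (y : Fin n → S) :
    2 * ∑ j, ∑ k, K (x j) (y k) ≤ ∑ j, ∑ k, K (x j) (x k) + ∑ j, ∑ k, K (y j) (y k) := by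
  have hyx : ∑ j, ∑ k, K (y j) (x k) = ∑ j, ∑ k, K (x j) (y k) := by
    rw [sum_comm]
    simp_rw [hsymm (y _)]
  have h := hK (m + n) (Fin.append x y) (Fin.append (fun _ ↦ 1) (fun _ ↦ -1))
  simp only [Fin.sum_univ_add, Fin.append_left, Fin.append_right, one_mul, neg_mul, neg_neg,
    sum_add_distrib, sum_neg_distrib, hyx] at h
  linarith

theorem stmt_18_general {S : Type*} (M : ℝ) (K : S → S → ℝ)
    (hsymm : ∀ a b : S, K a b = K b a)
    (hpsd : ∀ (n : ℕ) (z : Fin n → S) (c : Fin n → ℝ),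
      0 ≤ ∑ i : Fin n, ∑ j : Fin n, c i * c j * K (z i) (z j))
    (hdiag : ∀ z : S, K z z ≤ M)
    (N : ℕ) (x y : Fin N → S) :
    interactionEnergy K x y ≤ (N : ℝ) * M := by
  have hcross := IsPosSemidefKernel.two_mul_sum_sum_le hpsd hsymm x y
  have hx := sum_sum_eq_two_mul_sum_sum_lt_add_sum (fun j k ↦ K (x j) (x k)) fun _ _ ↦ hsymm _ _
  have hy := sum_sum_eq_two_mul_sum_sum_lt_add_sum (fun j k ↦ K (y j) (y k)) fun _ _ ↦ hsymm _ _
  have hdiag_sum (w : Fin N → S) : ∑ j, K (w j) (w j) ≤ N * M := by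
    simpa using sum_le_card_nsmul univ _ M fun j _ ↦ hdiag (w j)
  have := hdiag_sum x
  have := hdiag_sum y
  unfold interactionEnergy
  linarith

/-- **Onsager-type bound for bounded positive semidefinite kernels.**
If `K` is symmetric, positive semidefinite and `K(z,z) ≤ M` for all `z`, then
`ℰ(K; x; y) ≤ N·M` for all `N`-tuples `x`, `y`. -/
theorem stmt_18 {S : Type*} (M : ℝ) (hM : 0 ≤ M) (K : S → S → ℝ)
    (hsymm : ∀ a b : S, K a b = K b a)
    (hpsd : ∀ (n : ℕ) (z : Fin n → S) (c : Fin n → ℝ),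
      0 ≤ ∑ i : Fin n, ∑ j : Fin n, c i * c j * K (z i) (z j))
    (hdiag : ∀ z : S, K z z ≤ M)
    (N : ℕ) (hN : 1 ≤ N) (x y : Fin N → S) :
    interactionEnergy K x y ≤ (N : ℝ) * M :=
  stmt_18_general M K hsymm hpsd hdiag N x y
end
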